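/- arXiv:2003.03101 — 10 statements merged into one kernel-verified Lean document; each statement's English description precedes it below -/
import Mathlib

section
/- Let M ∈ ℂ^{m×m} and suppose S ∈ ℂ^{m×m} is invertible with S M S^{-1} = J, where J = diag(J_{s_1}(μ_1), ..., J_{s_q}(μ_q)) is a block-diagonal Jordan canonical form with Jordan blocks J_{s_l}(μ_l) of sizes s_l (s_1 + ... + s_q = m). If the pair (M, 𝟙_m^T) is observable, then there exists an invertible matrix S̃ ∈ ℂ^{m×m} with S̃ M S̃^{-1} = J and 𝟙_m^T S̃^{-1} = [e^{(1)}, ..., e^{(q)}], where e^{(l)} = (1, 0, ..., 0) ∈ ℂ^{1×s_l} for each l = 1, ..., q. -/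
open Matrix

/-- The `k×k` Jordan block with `μ` on the diagonal and `1` on the superdiagonal. -/
def jordanBlock (k : ℕ) (μ : ℂ) : Matrix (Fin k) (Fin k) ℂ :=
  Matrix.of fun i j => if j = i then μ else if (j : ℕ) = (i : ℕ) + 1 then 1 else 0

/-- Observability matrix of a pair `(M, c)`: its rows are `c, cM, cM², …`. -/
noncomputable def obsMatrix {ι : Type*} [Fintype ι] [DecidableEq ι]
    (M : Matrix ι ι ℂ) (c : ι → ℂ) :
    Matrix (Fin (Fintype.card ι)) (Fin (Fintype.card ι)) ℂ :=
  Matrix.of fun i j => (c ᵥ* M ^ (i : ℕ)) ((Fintype.equivFin ι).symm j)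

/-- The pair `(M, cᵀ)` (row vector `cᵀ`) is observable. -/
def Observable {ι : Type*} [Fintype ι] [DecidableEq ι]
    (M : Matrix ι ι ℂ) (c : ι → ℂ) : Prop :=
  IsUnit (obsMatrix M c)

/-!
Put `α := 𝟙ᵀ S⁻¹`. Observability is invariant under similarity, so `(J, α)` is observable; the
first basis vector of each Jordan block is an eigenvector of `J`, so by the Popov–Belevitch–Hautus
test the leading entry of every block of `α` is nonzero. Let `T` be block diagonal with `l`-th block
the upper triangular Toeplitz matrix with first row `α_l`. Then `T` is invertible (its diagonal is
the leading entry), it commutes with `J` (an upper triangular Toeplitz matrix commutes with the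
shift `J_k(0)`), and `[e⁽¹⁾, …, e⁽ᵠ⁾] T = α`. Hence `S̃ := T S` conjugates `M` to `J` and
`𝟙ᵀ S̃⁻¹ = α T⁻¹ = [e⁽¹⁾, …, e⁽ᵠ⁾]`.
-/

section Toeplitz

variable {R : Type*} {k : ℕ}

def upperToeplitz [Zero R] (r : Fin k → R) : Matrix (Fin k) (Fin k) R :=
  of fun i j => if i ≤ j then r ⟨j - i, (Nat.sub_le _ _).trans_lt j.isLt⟩ else 0

theorem upperToeplitz_apply_zero_left [Zero R] (r : Fin k → R) (h : 0 < k) (j : Fin k) :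
    upperToeplitz r (⟨0, h⟩ : Fin k) j = r j := by
  simp only [upperToeplitz, of_apply]
  rw [if_pos (show (⟨0, h⟩ : Fin k) ≤ j from Nat.zero_le _)]
  rfl

theorem isUpperTriangular_upperToeplitz [Zero R] (r : Fin k → R) :
    (upperToeplitz r).IsUpperTriangular := fun i j hji => by
  simp only [upperToeplitz, of_apply, if_neg (not_le.mpr (show j < i from hji))]

theorem isUnit_upperToeplitz [CommRing R] {r : Fin k → R} (hr : ∀ h : 0 < k, IsUnit (r ⟨0, h⟩)) :
    IsUnit (upperToeplitz r) := by
  rw [isUnit_iff_isUnit_det, det_of_isUpperTriangular (isUpperTriangular_upperToeplitz r),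
    IsUnit.prod_univ_iff]
  intro i
  simpa [upperToeplitz] using hr i.pos

end Toeplitz

section JordanBlock

variable {k : ℕ}

theorem jordanBlock_eq_smul_one_add (μ : ℂ) :
    jordanBlock k μ = μ • 1 + jordanBlock k 0 := by
  ext i j
  simp only [jordanBlock, of_apply, Matrix.add_apply, Matrix.smul_apply, one_apply, smul_eq_mul]
  split_ifs <;> simp_all [eq_comm]

theorem mul_jordanBlock_zero_apply (A : Matrix (Fin k) (Fin k) ℂ) (i j : Fin k) :
    (A * jordanBlock k 0) i j =
      if 0 < (j : ℕ) then A i ⟨j - 1, (Nat.sub_le _ _).trans_lt j.isLt⟩ else 0 := by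
  rw [mul_apply]
  split_ifs with h
  · rw [Finset.sum_eq_single ⟨j - 1, (Nat.sub_le _ _).trans_lt j.isLt⟩]
    · simp only [jordanBlock, of_apply, Fin.ext_iff]
      rw [if_neg (by omega), if_pos (by omega), mul_one]
    · intro x _ hx
      simp [jordanBlock, Fin.ext_iff] at hx ⊢
      omega
    · simp
  · refine Finset.sum_eq_zero fun x _ => ?_
    simp [jordanBlock]
    omega

theorem jordanBlock_zero_mul_apply (A : Matrix (Fin k) (Fin k) ℂ) (i j : Fin k) :
    (jordanBlock k 0 * A) i j =
      if h : (i : ℕ) + 1 < k then A ⟨i + 1, h⟩ j else 0 := by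
  rw [mul_apply]
  split_ifs with h
  · rw [Finset.sum_eq_single ⟨i + 1, h⟩]
    · simp [jordanBlock, Fin.ext_iff]
    · intro x _ hx
      simp [jordanBlock, Fin.ext_iff] at hx ⊢
      omega
    · simp
  · refine Finset.sum_eq_zero fun x _ => ?_
    simp [jordanBlock]
    omega

theorem upperToeplitz_commute_jordanBlock (r : Fin k → ℂ) (μ : ℂ) :
    Commute (upperToeplitz r) (jordanBlock k μ) := by
  have hshift : Commute (upperToeplitz r) (jordanBlock k 0) := by
    ext i j
    rw [mul_jordanBlock_zero_apply, jordanBlock_zero_mul_apply]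
    simp only [upperToeplitz, of_apply, Fin.le_def]
    split_ifs <;> first | rfl | omega | (congr 1; ext; simp; omega)
  rw [jordanBlock_eq_smul_one_add]
  exact ((Commute.one_right _).smul_right μ).add_right hshift

end JordanBlock

namespace Observable

variable {ι : Type*} [Fintype ι] [DecidableEq ι] {M : Matrix ι ι ℂ} {c : ι → ℂ}

theorem eq_zero_of_forall_dotProduct_eq_zero (hobs : Observable M c) {w : ι → ℂ}
    (hw : ∀ n : ℕ, (c ᵥ* M ^ n) ⬝ᵥ w = 0) : w = 0 := by
  have hker : obsMatrix M c *ᵥ (w ∘ (Fintype.equivFin ι).symm) = obsMatrix M c *ᵥ 0 := by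
    ext n
    rw [mulVec_zero, Pi.zero_apply, ← hw n]
    exact (Fintype.equivFin ι).symm.sum_comp fun x => (c ᵥ* M ^ (n : ℕ)) x * w x
  have := mulVec_injective_iff_isUnit.mpr hobs hker
  ext x
  simpa using congrFun this (Fintype.equivFin ι x)

theorem dotProduct_ne_zero_of_mulVec_eq_smul (hobs : Observable M c) {v : ι → ℂ} {μ : ℂ}
    (hv : M *ᵥ v = μ • v) (hv0 : v ≠ 0) : c ⬝ᵥ v ≠ 0 := by
  intro hcv
  refine hv0 (hobs.eq_zero_of_forall_dotProduct_eq_zero fun n => ?_)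
  have hpow : M ^ n *ᵥ v = μ ^ n • v := by
    induction n with
    | zero => simp
    | succ n ih => rw [pow_succ, ← mulVec_mulVec, hv, mulVec_smul, ih, smul_smul, pow_succ']
  rw [← dotProduct_mulVec, hpow, dotProduct_smul, hcv, smul_zero]

theorem conj {S : Matrix ι ι ℂ} (hobs : Observable M c) (hS : IsUnit S) :
    Observable (S * M * S⁻¹) (c ᵥ* S⁻¹) := by
  have hdet := (isUnit_iff_isUnit_det S).mp hS
  have hpow : ∀ n : ℕ, S⁻¹ * (S * M * S⁻¹) ^ n = M ^ n * S⁻¹ := fun n =>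
    SemiconjBy.pow_right (by simp [SemiconjBy, ← Matrix.mul_assoc, nonsing_inv_mul _ hdet]) n
  let e := Fintype.equivFin ι
  have : obsMatrix (S * M * S⁻¹) (c ᵥ* S⁻¹) = obsMatrix M c * S⁻¹.submatrix e.symm e.symm := by
    ext n j
    rw [obsMatrix, of_apply, vecMul_vecMul, hpow, ← vecMul_vecMul]
    exact (e.symm.sum_comp _).symm
  rw [Observable, this]
  exact hobs.mul ((isUnit_submatrix_equiv _ _).mpr (isUnit_nonsing_inv_iff.mpr hS))

end Observable

section BlockDiagonal

variable {ι : Type*} [Fintype ι] [DecidableEq ι]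

theorem isUnit_blockDiagonal' {R : Type*} [Semiring R] {m : ι → Type*} [∀ l, Fintype (m l)]
    [∀ l, DecidableEq (m l)] {A : ∀ l, Matrix (m l) (m l) R} (hA : ∀ l, IsUnit (A l)) :
    IsUnit (blockDiagonal' A) :=
  (Pi.isUnit_iff.mpr hA).map (blockDiagonal'RingHom m R)

theorem commute_blockDiagonal' {R : Type*} [Semiring R] {m : ι → Type*} [∀ l, Fintype (m l)]
    [∀ l, DecidableEq (m l)] {A B : ∀ l, Matrix (m l) (m l) R} (h : ∀ l, Commute (A l) (B l)) :
    Commute (blockDiagonal' A) (blockDiagonal' B) :=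
  (Pi.commute_iff.mpr h).map (blockDiagonal'RingHom m R)

variable {s : ι → ℕ}

theorem firstUnitVectors_vecMul_blockDiagonal'_upperToeplitz {R : Type*} [Semiring R]
    (r : ∀ l, Fin (s l) → R) :
    (fun li : (l : ι) × Fin (s l) => if (li.2 : ℕ) = 0 then (1 : R) else 0) ᵥ*
      blockDiagonal' (fun l => upperToeplitz (r l)) = fun li => r li.1 li.2 := by
  ext ⟨l, j⟩
  rw [vecMul, dotProduct, Finset.sum_eq_single ⟨l, ⟨0, j.pos⟩⟩]
  · simp [upperToeplitz_apply_zero_left]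
  · rintro ⟨l', i⟩ _ hne
    by_cases hl : l' = l
    · subst hl
      have hi : (i : ℕ) ≠ 0 := fun hi => hne (by rw [show i = ⟨0, j.pos⟩ from Fin.ext hi])
      simp [hi]
    · simp [blockDiagonal'_apply_ne _ _ _ hl]
  · simp

theorem blockDiagonal'_jordanBlock_mulVec_single (μ : ι → ℂ) (l : ι) (h : 0 < s l) :
    blockDiagonal' (fun l => jordanBlock (s l) (μ l)) *ᵥ Pi.single ⟨l, ⟨0, h⟩⟩ 1 =
      μ l • Pi.single ⟨l, ⟨0, h⟩⟩ 1 := by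
  ext ⟨l', i⟩
  rw [mulVec_single_one]
  by_cases hl : l' = l
  · subst hl
    simp [jordanBlock, Pi.single_apply, Fin.ext_iff, eq_comm]
  · simp [blockDiagonal'_apply_ne _ _ _ hl, hl]

end BlockDiagonal

theorem mul_mul_inv_eq_of_commute {n R : Type*} [Fintype n] [DecidableEq n] [CommRing R]
    {T S M J : Matrix n n R} (hT : IsUnit T) (hTJ : Commute T J) (hJ : S * M * S⁻¹ = J) :
    T * S * M * (T * S)⁻¹ = J := by
  calc T * S * M * (T * S)⁻¹ = T * (S * M * S⁻¹) * T⁻¹ := by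
        simp only [Matrix.mul_inv_rev, Matrix.mul_assoc]
    _ = J := by
        rw [hJ, hTJ.eq, mul_nonsing_inv_cancel_right _ _ ((isUnit_iff_isUnit_det T).mp hT)]

/-- If `M` is similar via `S` to a Jordan canonical form `J` (block diagonal with
Jordan blocks `J_{s l}(μ l)`) and the pair `(M, 𝟙ᵀ)` is observable, then the
transformation to Jordan form can be chosen so that `𝟙ᵀ S̃⁻¹` consists of the
blocks `e₁ = (1, 0, …, 0)`. -/
theorem alpha_can_be_chosen_as_first_unit_vectors
    {q : ℕ} (s : Fin q → ℕ) (μ : Fin q → ℂ)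
    (M S : Matrix ((l : Fin q) × Fin (s l)) ((l : Fin q) × Fin (s l)) ℂ)
    (hS : IsUnit S)
    (hJ : S * M * S⁻¹ = Matrix.blockDiagonal' fun l => jordanBlock (s l) (μ l))
    (hobs : Observable M fun _ => (1 : ℂ)) :
    ∃ S' : Matrix ((l : Fin q) × Fin (s l)) ((l : Fin q) × Fin (s l)) ℂ,
      IsUnit S' ∧
      S' * M * S'⁻¹ = Matrix.blockDiagonal' (fun l => jordanBlock (s l) (μ l)) ∧
      ∀ li : (l : Fin q) × Fin (s l),
        ((fun _ => (1 : ℂ)) ᵥ* S'⁻¹) li = if (li.2 : ℕ) = 0 then 1 else 0 := by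
  have hobsJ : Observable (blockDiagonal' fun l => jordanBlock (s l) (μ l)) ((fun _ => 1) ᵥ* S⁻¹) :=
    hJ ▸ hobs.conj hS
  have hα : ∀ l (h : 0 < s l), IsUnit (((fun _ => (1 : ℂ)) ᵥ* S⁻¹) ⟨l, ⟨0, h⟩⟩) := fun l h => by
    simpa using hobsJ.dotProduct_ne_zero_of_mulVec_eq_smul
      (blockDiagonal'_jordanBlock_mulVec_single μ l h) (Pi.single_ne_zero_iff.mpr one_ne_zero)
  set T := blockDiagonal' fun l => upperToeplitz fun i => ((fun _ => (1 : ℂ)) ᵥ* S⁻¹) ⟨l, i⟩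
  have hT : IsUnit T := isUnit_blockDiagonal' fun l => isUnit_upperToeplitz (hα l)
  have hTJ : Commute T (blockDiagonal' fun l => jordanBlock (s l) (μ l)) :=
    commute_blockDiagonal' fun l => upperToeplitz_commute_jordanBlock _ (μ l)
  have he : (fun li : (l : Fin q) × Fin (s l) => if (li.2 : ℕ) = 0 then (1 : ℂ) else 0) ᵥ* T =
      (fun _ => (1 : ℂ)) ᵥ* S⁻¹ :=
    firstUnitVectors_vecMul_blockDiagonal'_upperToeplitz _
  refine ⟨T * S, hT.mul hS, mul_mul_inv_eq_of_commute hT hTJ hJ, fun li => ?_⟩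
  rw [Matrix.mul_inv_rev, ← vecMul_vecMul, ← he, vecMul_vecMul,
    mul_nonsing_inv _ ((isUnit_iff_isUnit_det T).mp hT), vecMul_one]
end

section
/- Let A ∈ ℝ^{n×n}, h_0 ∈ ℝ^n, and let μ ∈ ℂ with μ ≠ 0 and I_n − μA invertible. Let J = J_k(μ) ∈ ℂ^{k×k} be a Jordan block, and suppose H ∈ ℂ^{n×k} satisfies H = h_0 e_1 + A H J, where h_0 e_1 ∈ ℂ^{n×k} is the matrix whose first column is h_0 and whose remaining columns are zero. Then the span of the columns of H equals span{ (I_n − μA)^{-i} h_0 : i = 1, ..., k }. -/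
open Matrix

/-!
Write `c_j` for the columns of `H` and `M = I - μA`. Read column by column, the Sylvester
equation says `M c₀ = h₀` and `M⁻¹ c_j = c_j + μ c_{j+1}`, so `c_j = q(M⁻¹)^j (M⁻¹ h₀)`
with `q = μ⁻¹ (X - 1)`. Since `q` has degree one, `q^0, …, q^{k-1}` span the same space
of polynomials of degree `< k` as `1, X, …, X^{k-1}`; evaluating at `M⁻¹` and applying
the result to `M⁻¹ h₀` turns this into the claimed equality of spans.
-/

open Polynomial Submodule

section Krylov

variable {K V : Type*} [Field K] [AddCommGroup V] [Module K V]

theorem span_image_pow_Iio_eq_degreeLT {q : K[X]} (hq : q.degree = 1) (k : ℕ) :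
    span K ((q ^ ·) '' Set.Iio k) = degreeLT K k := by
  have hq₀ : q ≠ 0 := by rintro rfl; simp at hq
  exact Sequence.span_degreeLT ⟨(q ^ ·), fun i => by simp [degree_pow, hq]⟩
    fun i _ => (leadingCoeff_ne_zero.mpr (pow_ne_zero i hq₀)).isUnit

theorem span_range_aeval_pow_eq_span_range_pow (f : Module.End K V) (y : V) {q : K[X]}
    (hq : q.degree = 1) (k : ℕ) :
    span K (Set.range fun i : Fin k => aeval f (q ^ (i : ℕ)) y) =
      span K (Set.range fun i : Fin k => (f ^ (i : ℕ)) y) := by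
  let φ : K[X] →ₗ[K] V := LinearMap.applyₗ y ∘ₗ (aeval f).toLinearMap
  have hrange (p : K[X]) : Set.range (fun i : Fin k => φ (p ^ (i : ℕ))) =
      φ '' ((p ^ ·) '' Set.Iio k) := by
    rw [← Fin.range_val, ← Set.range_comp, ← Set.range_comp]; rfl
  calc span K (Set.range fun i : Fin k => φ (q ^ (i : ℕ)))
      = map φ (degreeLT K k) := by rw [hrange, span_image, span_image_pow_Iio_eq_degreeLT hq]
    _ = span K (Set.range fun i : Fin k => φ (X ^ (i : ℕ))) := by
      rw [hrange, span_image, span_image_pow_Iio_eq_degreeLT degree_X]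
    _ = _ := by simp [φ]

variable {m : ℕ} {f : Module.End K V} {μ : K} {c : Fin (m + 1) → V}

theorem eq_aeval_pow_of_recurrence
    (hc : ∀ j : Fin m, f (c j.castSucc) = c j.castSucc + μ • c j.succ) (hμ : μ ≠ 0)
    (j : Fin (m + 1)) :
    c j = aeval f ((C μ⁻¹ * (X - 1)) ^ (j : ℕ)) (c 0) := by
  induction j using Fin.induction with
  | zero => simp
  | succ j ih =>
    rw [Fin.val_succ, pow_succ', map_mul, Module.End.mul_apply, ← Fin.val_castSucc, ← ih]
    simp [hc j, smul_smul, mul_inv_cancel₀ hμ]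

theorem span_range_eq_span_range_pow_of_recurrence
    (hc : ∀ j : Fin m, f (c j.castSucc) = c j.castSucc + μ • c j.succ) (hμ : μ ≠ 0) :
    span K (Set.range c) = span K (Set.range fun j : Fin (m + 1) => (f ^ (j : ℕ)) (c 0)) := by
  have hq : (C μ⁻¹ * (X - 1) : K[X]).degree = 1 := by
    rw [degree_C_mul (inv_ne_zero hμ)]; simpa using degree_X_sub_C (1 : K)
  rw [← span_range_aeval_pow_eq_span_range_pow f (c 0) hq]
  exact congrArg _ (congrArg _ (funext (eq_aeval_pow_of_recurrence hc hμ)))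

end Krylov

section JordanSylvester

variable {ι : Type*} {m : ℕ}

theorem transpose_mul_jordanBlock_zero (H : Matrix ι (Fin (m + 1)) ℂ) (μ : ℂ) :
    (H * jordanBlock (m + 1) μ)ᵀ 0 = μ • Hᵀ 0 := by
  ext i
  simp [mul_apply, jordanBlock, mul_comm]

theorem transpose_mul_jordanBlock_succ (H : Matrix ι (Fin (m + 1)) ℂ) (μ : ℂ) (j : Fin m) :
    (H * jordanBlock (m + 1) μ)ᵀ j.succ = μ • Hᵀ j.succ + Hᵀ j.castSucc := by
  ext i
  rw [transpose_apply, mul_apply, Fintype.sum_eq_add j.succ j.castSucc]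
  · simp [jordanBlock, Fin.ext_iff, mul_comm]
  · simp [Fin.ext_iff]
  · rintro l ⟨h, h'⟩
    simp_all [jordanBlock, Fin.ext_iff, eq_comm]

variable [Fintype ι] {B : Matrix ι ι ℂ} {e : ι → ℂ} {μ : ℂ}
  {H : Matrix ι (Fin (m + 1)) ℂ}

theorem transpose_eq_of_sylvester
    (hH : H = (of fun i (j : Fin (m + 1)) => if (j : ℕ) = 0 then e i else 0) +
      B * H * jordanBlock (m + 1) μ) (j : Fin (m + 1)) :
    Hᵀ j = (if j = 0 then e else 0) + B *ᵥ (H * jordanBlock (m + 1) μ)ᵀ j := by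
  conv_lhs => rw [hH]
  ext i
  by_cases hj : j = 0 <;>
    simp [hj, Fin.val_eq_zero_iff, Matrix.mul_assoc, mulVec, dotProduct, mul_apply, mul_comm]

theorem mulVec_transpose_zero_of_sylvester [DecidableEq ι]
    (hH : H = (of fun i (j : Fin (m + 1)) => if (j : ℕ) = 0 then e i else 0) +
      B * H * jordanBlock (m + 1) μ) :
    (1 - μ • B) *ᵥ Hᵀ 0 = e := by
  have h := transpose_eq_of_sylvester hH 0
  rw [transpose_mul_jordanBlock_zero, if_pos rfl, mulVec_smul] at h
  rw [sub_mulVec, one_mulVec, smul_mulVec, sub_eq_iff_eq_add, ← h]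

theorem mulVec_transpose_succ_of_sylvester [DecidableEq ι]
    (hH : H = (of fun i (j : Fin (m + 1)) => if (j : ℕ) = 0 then e i else 0) +
      B * H * jordanBlock (m + 1) μ) (j : Fin m) :
    (1 - μ • B) *ᵥ (Hᵀ j.castSucc + μ • Hᵀ j.succ) = Hᵀ j.castSucc := by
  have h := transpose_eq_of_sylvester hH j.succ
  rw [transpose_mul_jordanBlock_succ, if_neg (Fin.succ_ne_zero j), zero_add,
    mulVec_add, mulVec_smul] at h
  simp only [sub_mulVec, one_mulVec, smul_mulVec, mulVec_add, mulVec_smul]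
  linear_combination (norm := module) μ • h

end JordanSylvester

/-- If `H = h₀e₁ + AHJ_k(μ)` with `μ ≠ 0` and `I − μA` invertible, then the columns
of `H` span the rational Krylov space `span{(I − μA)⁻ⁱ h₀ : i = 1, …, k}`. -/
theorem span_of_jordan_sylvester_block_nonzero
    {n k : ℕ} (A : Matrix (Fin n) (Fin n) ℝ) (h₀ : Fin n → ℝ) (μ : ℂ)
    (hμ : μ ≠ 0)
    (hinv : IsUnit (1 - μ • A.map (Complex.ofReal : ℝ → ℂ)))
    (H : Matrix (Fin n) (Fin k) ℂ)
    (hH : H = (Matrix.of fun i (j : Fin k) => if (j : ℕ) = 0 then (h₀ i : ℂ) else 0) +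
        A.map (Complex.ofReal : ℝ → ℂ) * H * jordanBlock k μ) :
    Submodule.span ℂ (Set.range Hᵀ) =
      Submodule.span ℂ (Set.range fun i : Fin k =>
        ((1 - μ • A.map (Complex.ofReal : ℝ → ℂ))⁻¹ ^ ((i : ℕ) + 1)) *ᵥ
          fun r => (h₀ r : ℂ)) := by
  cases k with
  | zero => rw [Set.range_eq_empty Hᵀ, Set.range_eq_empty]
  | succ m =>
    have := hinv.invertible
    have hcol0 := inv_mulVec_eq_vec (mulVec_transpose_zero_of_sylvester hH).symm
    have hrec (j : Fin m) :
        toLin' (1 - μ • A.map (Complex.ofReal : ℝ → ℂ))⁻¹ (Hᵀ j.castSucc) =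
          Hᵀ j.castSucc + μ • Hᵀ j.succ :=
      inv_mulVec_eq_vec (mulVec_transpose_succ_of_sylvester hH j).symm
    rw [span_range_eq_span_range_pow_of_recurrence hrec hμ, ← hcol0]
    simp [← toLin'_pow, mulVec_mulVec, pow_succ]
end

section
/- Let A ∈ ℝ^{n×n}, B ∈ ℝ^{n×1}, C ∈ ℝ^{1×n}, and let m < n. Let Λ̂_c ∈ ℂ^{m×m} be such that (Λ̂_c^T, 𝟙_m^T) is observable, with distinct nonzero eigenvalues μ_1, ..., μ_{q_c} of algebraic multiplicities s_1, ..., s_{q_c}, and assume I_n − μ_l A is invertible for each l. Let Ĥ_c ∈ ℂ^{n×m} satisfy Ĥ_c = B 𝟙_m^T + A Ĥ_c Λ̂_c^T and set Z_c = Ĥ_c D_c for an invertible diagonal D_c ∈ ℂ^{m×m}. Analogously, let Λ̂_o ∈ ℂ^{m×m} with (Λ̂_o^T, 𝟙_m^T) observable, distinct nonzero eigenvalues ν_1, ..., ν_{q_o} of multiplicities t_1, ..., t_{q_o}, with I_n − ν_l A^T invertible for each l; let Ĥ_o ∈ ℂ^{n×m} satisfy Ĥ_o = C^T 𝟙_m^T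 + A^T Ĥ_o Λ̂_o^T and set Z_o = Ĥ_o D_o with D_o invertible diagonal. Suppose Z_o^H Z_c ∈ ℂ^{m×m} is invertible with singular value decomposition Z_o^H Z_c = U Σ T^H (U, T ∈ ℂ^{m×m} unitary, Σ diagonal with positive entries), and define V = Z_c T Σ^{-1/2}, W = Z_o U Σ^{-1/2}, Â = W^H A V, B̂ = W^H B, Ĉ = C V. Assume additionally that Â − μ_l^{-1} I_m is invertible for l = 1, ..., q_c and Â − conj(ν_l)^{-1} I_m is invertible for l = 1, ..., q_o. Then for each l = 1, ..., q_c and j = 0, ..., s_l − 1 it holds C (A − μ_l^{-1} I_n)^{-(j+1)} B = Ĉ (Â − μ_l^{-1} I_m)^{-(j+1)} B̂, and for each l = 1, ..., q_o and j = 0, ..., t_l − 1 it holds C (A − conj(ν_l)^{-1} I_n)^{-(j+1)} B = Ĉ (Â − conj(ν_l)^{-1} I_m)^{-(j+1)} B̂. -/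
/-!
Unrolling the Sylvester equation `H = b 𝟙ᵀ + A H Λᵀ` after the shift `Λᵀ ↦ Λᵀ - μ` gives
`H u = ∑_{j<s} (𝟙ᵀ (Λᵀ - μ)ʲ u) (KA)ʲ K b + (KA)ˢ H (Λᵀ - μ)ˢ u` with `K = (1 - μA)⁻¹`.
For `u = g(Λᵀ) w`, where `g` is the cofactor of `(X - μ)ˢ` in the characteristic polynomial,
the remainder vanishes by Cayley–Hamilton, and observability lets us choose `w` so that any
single `(KA)ʲ K b` comes out. Hence the range of `H`, and so of `V`, contains the Krylov vectors
`(A - μ⁻¹)^{-(j+1)} b` for `j < s`; dually the range of `W` contains the left Krylov vectors.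
The SVD makes `WᴴV = 1`, so `VWᴴ` is a projector onto the range of `V`, and a projection that
fixes the Krylov vectors at a point matches the moments there.
-/

open Matrix Polynomial

theorem Matrix.mulVec_surjective_of_linearIndependent_row {K m n : Type*} [Field K] [Fintype m]
    [Fintype n] {A : Matrix m n K} (h : LinearIndependent K A.row) :
    Function.Surjective A.mulVec := by
  have hrange : LinearMap.range A.mulVecLin = ⊤ := Submodule.eq_top_of_finrank_eq <| by
    rw [Module.finrank_fintype_fun_eq_card]
    exact h.rank_matrix
  exact LinearMap.range_eq_top.1 hrange

theorem Polynomial.linearIndependent_X_sub_C_pow {R : Type*} [CommRing R] [IsDomain R] (μ : R) :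
    LinearIndependent R fun j : ℕ => (X - C μ) ^ j :=
  (⟨fun j => (X - C μ) ^ j, fun j => by simp⟩ : Polynomial.Sequence R).linearIndependent

namespace Observable

variable {ι : Type*} [Fintype ι] [DecidableEq ι] {M : Matrix ι ι ℂ} {c : ι → ℂ}

theorem linearIndependent (h : Observable M c) :
    LinearIndependent ℂ fun i : Fin (Fintype.card ι) => c ᵥ* M ^ (i : ℕ) := by
  have hrows : (fun i : Fin (Fintype.card ι) => c ᵥ* M ^ (i : ℕ)) =
      LinearEquiv.funCongrLeft ℂ ℂ (Fintype.equivFin ι) ∘ (obsMatrix M c).row := by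
    ext i k
    exact congrArg (c ᵥ* M ^ (i : ℕ)) ((Fintype.equivFin ι).symm_apply_apply k).symm
  rw [hrows]
  exact (Matrix.linearIndependent_rows_of_isUnit h).map' _ (LinearEquiv.ker _)

theorem eq_zero_of_vecMul_aeval_eq_zero (h : Observable M c) {q : ℂ[X]}
    (hq : q ∈ degreeLT ℂ (Fintype.card ι)) (hq0 : c ᵥ* aeval M q = 0) : q = 0 := by
  by_contra hne
  have hdeg := (natDegree_lt_iff_degree_lt hne).2 (mem_degreeLT.1 hq)
  have hcoeff := Fintype.linearIndependent_iff.mp h.linearIndependent (fun i => q.coeff i) <| by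
    rw [aeval_eq_sum_range' hdeg, Matrix.vecMul_sum] at hq0
    simpa [Finset.sum_range, Matrix.vecMul_smul] using hq0
  refine hne (Polynomial.ext fun i => ?_)
  rw [coeff_zero]
  by_cases hi : i < Fintype.card ι
  · exact hcoeff ⟨i, hi⟩
  · exact coeff_eq_zero_of_natDegree_lt (by omega)

theorem linearIndependent_vecMul_aeval_X_sub_C_pow_mul (h : Observable M c) (μ : ℂ) {S : ℕ}
    {g : ℂ[X]} (hg : g ≠ 0) (hdeg : S + g.natDegree ≤ Fintype.card ι) :
    LinearIndependent ℂ fun j : Fin S => c ᵥ* aeval M ((X - C μ) ^ (j : ℕ) * g) := by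
  rw [Fintype.linearIndependent_iff]
  intro a ha
  set q := ∑ j : Fin S, a j • (X - C μ) ^ (j : ℕ)
  have hq : q = 0 := by
    by_contra hq
    have hqS : q ∈ degreeLT ℂ S :=
      Submodule.sum_mem _ fun j _ => Submodule.smul_mem _ _ (mem_degreeLT.2 (by simp))
    have hqdeg := (natDegree_lt_iff_degree_lt hq).2 (mem_degreeLT.1 hqS)
    refine mul_ne_zero hq hg (h.eq_zero_of_vecMul_aeval_eq_zero ?_ ?_)
    · rw [mem_degreeLT, ← natDegree_lt_iff_degree_lt (mul_ne_zero hq hg), natDegree_mul hq hg]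
      omega
    · simpa [q, Finset.sum_mul, Matrix.vecMul_sum, smul_mul_assoc, Matrix.vecMul_smul] using ha
  exact Fintype.linearIndependent_iff.mp
    ((linearIndependent_X_sub_C_pow μ).comp _ Fin.val_injective) a hq

end Observable

section Stein

variable {R n ι : Type*} [CommRing R] [Fintype n] [DecidableEq n] [Fintype ι] [DecidableEq ι]
  {A : Matrix n n R} {M : Matrix ι ι R} {H : Matrix n ι R} {b : n → R} {c : ι → R}

theorem Matrix.eq_sum_vecMulVec_add_of_eq_vecMulVec_add (hH : H = vecMulVec b c + A * H * M)
    (r : ℕ) :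
    H = ∑ j ∈ Finset.range r, vecMulVec (A ^ j *ᵥ b) (c ᵥ* M ^ j) + A ^ r * H * M ^ r := by
  induction r with
  | zero => simp
  | succ r ih =>
    have step : A ^ r * H * M ^ r =
        vecMulVec (A ^ r *ᵥ b) (c ᵥ* M ^ r) + A ^ (r + 1) * H * M ^ (r + 1) := by
      conv_lhs => rw [hH]
      rw [Matrix.mul_add, Matrix.add_mul, mul_vecMulVec, vecMulVec_mul, pow_succ A, pow_succ' M]
      simp only [Matrix.mul_assoc]
    rw [Finset.sum_range_succ, add_assoc, ← step]
    exact ih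

theorem Matrix.eq_vecMulVec_add_shift_of_eq_vecMulVec_add (hH : H = vecMulVec b c + A * H * M)
    {μ : R} (hA : IsUnit (1 - μ • A)) :
    H = vecMulVec ((1 - μ • A)⁻¹ *ᵥ b) c + (1 - μ • A)⁻¹ * A * H * (M - μ • 1) := by
  have hshift : (1 - μ • A) * H = vecMulVec b c + A * H * (M - μ • 1) := by
    rw [Matrix.sub_mul, Matrix.one_mul, Matrix.mul_sub, Matrix.mul_smul, Matrix.mul_one,
      Matrix.smul_mul]
    nth_rewrite 1 [hH]
    abel
  rw [← mul_vecMulVec, Matrix.mul_assoc _ A, Matrix.mul_assoc _ (A * H), ← Matrix.mul_add,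
    ← hshift, ← Matrix.mul_assoc, Matrix.nonsing_inv_mul _ ((isUnit_iff_isUnit_det _).1 hA),
    Matrix.one_mul]

end Stein

section Krylov

variable {n ι : Type*} [Fintype n] [DecidableEq n] [Fintype ι] [DecidableEq ι]
  {A : Matrix n n ℂ} {M : Matrix ι ι ℂ} {H : Matrix n ι ℂ} {b : n → ℂ} {c : ι → ℂ} {μ : ℂ}
  {S : ℕ}

theorem Matrix.pow_mulVec_mem_range_of_eq_vecMulVec_add (hH : H = vecMulVec b c + A * H * M)
    (hobs : Observable M c) (hdvd : (X - C μ) ^ S ∣ M.charpoly) (hA : IsUnit (1 - μ • A))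
    {j : ℕ} (hj : j < S) :
    ((1 - μ • A)⁻¹ * A) ^ j *ᵥ ((1 - μ • A)⁻¹ *ᵥ b) ∈ LinearMap.range H.mulVecLin := by
  obtain ⟨g, hg⟩ := hdvd
  have hg0 : g ≠ 0 := by
    rintro rfl
    exact M.charpoly_monic.ne_zero (by simpa using hg)
  have hdeg : S + g.natDegree = Fintype.card ι := by
    rw [← M.charpoly_natDegree_eq_dim, hg, natDegree_mul (pow_ne_zero _ (X_sub_C_ne_zero μ)) hg0,
      natDegree_pow, natDegree_X_sub_C, mul_one]
  obtain ⟨w, hw⟩ := Matrix.mulVec_surjective_of_linearIndependent_row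
    (hobs.linearIndependent_vecMul_aeval_X_sub_C_pow_mul μ hg0 hdeg.le) (Pi.single ⟨j, hj⟩ 1)
  have hN : ∀ i, (M - μ • 1) ^ i * aeval M g = aeval M ((X - C μ) ^ i * g) := by
    simp [Algebra.algebraMap_eq_smul_one]
  have hcayley : (M - μ • 1) ^ S * aeval M g = 0 := by
    rw [hN, ← hg, aeval_self_charpoly]
  have hremainder : (((1 - μ • A)⁻¹ * A) ^ S * H * (M - μ • 1) ^ S) *ᵥ (aeval M g *ᵥ w) = 0 := by
    rw [mulVec_mulVec, Matrix.mul_assoc, hcayley, Matrix.mul_zero, zero_mulVec]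
  have hcoeff : ∀ i : Fin S, (c ᵥ* (M - μ • 1) ^ (i : ℕ)) ⬝ᵥ (aeval M g *ᵥ w) =
      (Pi.single (⟨j, hj⟩ : Fin S) (1 : ℂ) : Fin S → ℂ) i := by
    intro i
    rw [dotProduct_mulVec, vecMul_vecMul, hN]
    exact congrFun hw i
  refine ⟨aeval M g *ᵥ w, ?_⟩
  rw [Matrix.mulVecLin_apply]
  nth_rewrite 1 [eq_sum_vecMulVec_add_of_eq_vecMulVec_add
    (eq_vecMulVec_add_shift_of_eq_vecMulVec_add hH hA) S]
  rw [add_mulVec, hremainder, add_zero, sum_mulVec, Finset.sum_range]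
  simp only [vecMulVec_mulVec, hcoeff, op_smul_eq_smul, Pi.single_apply, ite_smul, one_smul,
    zero_smul, Finset.sum_ite_eq', Finset.mem_univ, if_true]

theorem Matrix.inv_one_sub_smul_pow_succ_mulVec_mem_range (hH : H = vecMulVec b c + A * H * M)
    (hobs : Observable M c) (hdvd : (X - C μ) ^ S ∣ M.charpoly) (hA : IsUnit (1 - μ • A))
    {k : ℕ} (hk : k < S) :
    (1 - μ • A)⁻¹ ^ (k + 1) *ᵥ b ∈ LinearMap.range H.mulVecLin := by
  set K := (1 - μ • A)⁻¹
  have hK : K = 1 + μ • (K * A) := by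
    have := Matrix.nonsing_inv_mul _ ((isUnit_iff_isUnit_det _).1 hA)
    rw [Matrix.mul_sub, Matrix.mul_one, Matrix.mul_smul, sub_eq_iff_eq_add] at this
    exact this
  have hpow : K ^ k = aeval (K * A) ((C μ * X + 1) ^ k) := by
    conv_lhs => rw [hK]
    simp [Algebra.smul_def, add_comm]
  have hdeg : ((C μ * X + 1) ^ k).natDegree ≤ k := by
    compute_degree
  rw [pow_succ, ← mulVec_mulVec, hpow, aeval_eq_sum_range, sum_mulVec]
  refine Submodule.sum_mem _ fun i hi => ?_
  rw [smul_mulVec]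
  exact Submodule.smul_mem _ _ (pow_mulVec_mem_range_of_eq_vecMulVec_add hH hobs hdvd hA
    (by rw [Finset.mem_range] at hi; omega))

end Krylov

section PetrovGalerkin

variable {R n r p q : Type*} [CommRing R] [Fintype n] [DecidableEq n] [Fintype r] [DecidableEq r]
  {A : Matrix n n R} {V : Matrix n r R} {B : Matrix n p R} {C : Matrix q n R} {σ : R}

theorem Matrix.mul_inv_sub_smul_pow_mul_eq_of_exists_mul_eq {W : Matrix r n R} (hWV : W * V = 1)
    (hA : IsUnit (A - σ • 1)) (hAr : IsUnit (W * A * V - σ • 1)) {J : ℕ}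
    (hB : ∀ i ≤ J, ∃ Y : Matrix r p R, V * Y = (A - σ • 1)⁻¹ ^ (i + 1) * B) :
    C * (A - σ • 1)⁻¹ ^ (J + 1) * B = C * V * (W * A * V - σ • 1)⁻¹ ^ (J + 1) * (W * B) := by
  set E := (A - σ • 1)⁻¹
  set F := (W * A * V - σ • 1)⁻¹
  have hproj : ∀ i ≤ J, V * (W * (E ^ (i + 1) * B)) = E ^ (i + 1) * B := by
    intro i hi
    obtain ⟨Y, hY⟩ := hB i hi
    rw [← hY, ← Matrix.mul_assoc W, hWV, Matrix.one_mul]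
  have hreduce : ∀ i ≤ J + 1, W * (E ^ i * B) = F ^ i * (W * B) := by
    intro i
    induction i with
    | zero => simp
    | succ i ih =>
      intro hi
      have hintertwine : (W * A * V - σ • 1) * (W * (E ^ (i + 1) * B)) = W * (E ^ i * B) := by
        calc (W * A * V - σ • 1) * (W * (E ^ (i + 1) * B))
            = W * (A * (V * (W * (E ^ (i + 1) * B))) - σ • (E ^ (i + 1) * B)) := by
              simp only [Matrix.sub_mul, Matrix.mul_sub, Matrix.smul_mul, Matrix.mul_smul,
                Matrix.one_mul, Matrix.mul_assoc]
          _ = W * ((A - σ • 1) * E * (E ^ i * B)) := by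
              rw [hproj i (by omega), pow_succ', Matrix.sub_mul, Matrix.sub_mul, Matrix.smul_mul,
                Matrix.smul_mul, Matrix.one_mul]
              simp only [Matrix.mul_assoc]
          _ = W * (E ^ i * B) := by
              rw [Matrix.mul_nonsing_inv _ ((isUnit_iff_isUnit_det _).1 hA), Matrix.one_mul]
      rw [pow_succ' F, Matrix.mul_assoc F, ← ih (by omega), ← hintertwine, ← Matrix.mul_assoc F,
        Matrix.nonsing_inv_mul _ ((isUnit_iff_isUnit_det _).1 hAr), Matrix.one_mul]
  rw [Matrix.mul_assoc C, ← hproj J le_rfl, hreduce (J + 1) le_rfl]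
  simp only [Matrix.mul_assoc]

theorem Matrix.mul_inv_sub_smul_pow_mul_eq_of_exists_mul_eq_conjTranspose [StarRing R]
    {W : Matrix n r R} (hWV : Wᴴ * V = 1) (hA : IsUnit (A - σ • 1))
    (hAr : IsUnit (Wᴴ * A * V - σ • 1)) {J : ℕ}
    (hC : ∀ i ≤ J, ∃ Y : Matrix r q R, W * Y = (Aᴴ - star σ • 1)⁻¹ ^ (i + 1) * Cᴴ) :
    C * (A - σ • 1)⁻¹ ^ (J + 1) * B = C * V * (Wᴴ * A * V - σ • 1)⁻¹ ^ (J + 1) * (Wᴴ * B) := by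
  have hAH : Aᴴ - star σ • 1 = (A - σ • 1)ᴴ := by
    simp [conjTranspose_sub, conjTranspose_smul]
  have hArH : Vᴴ * Aᴴ * Wᴴᴴ - star σ • 1 = (Wᴴ * A * V - σ • 1)ᴴ := by
    simp [conjTranspose_sub, conjTranspose_smul, conjTranspose_mul, Matrix.mul_assoc]
  have hdual := mul_inv_sub_smul_pow_mul_eq_of_exists_mul_eq (A := Aᴴ) (W := Vᴴ) (C := Bᴴ)
    (by simpa using congrArg conjTranspose hWV) (by rw [hAH]; exact (isUnit_conjTranspose _).2 hA)
    (by rw [← conjTranspose_conjTranspose W, hArH]; exact (isUnit_conjTranspose _).2 hAr) hC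
  have := congrArg conjTranspose hdual
  rw [hAH, ← conjTranspose_conjTranspose W, hArH] at this
  simpa [conjTranspose_mul, conjTranspose_pow, conjTranspose_nonsing_inv, Matrix.mul_assoc]
    using this

end PetrovGalerkin

section ShiftInvert

variable {n K : Type*} [DecidableEq n] [Field K] {μ : K}

theorem Matrix.sub_inv_smul_one_eq (hμ : μ ≠ 0) (A : Matrix n n K) :
    A - μ⁻¹ • 1 = (-μ⁻¹) • (1 - μ • A) := by
  rw [smul_sub, smul_smul, neg_mul, inv_mul_cancel₀ hμ]
  module

theorem Matrix.isUnit_sub_inv_smul_one [Fintype n] (hμ : μ ≠ 0) {A : Matrix n n K}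
    (h : IsUnit (1 - μ • A)) :
    IsUnit (A - μ⁻¹ • 1) := by
  rw [sub_inv_smul_one_eq hμ]
  exact h.smul (Units.mk0 _ (neg_ne_zero.2 (inv_ne_zero hμ)))

theorem Matrix.inv_sub_inv_smul_one [Fintype n] (hμ : μ ≠ 0) {A : Matrix n n K}
    (h : IsUnit (1 - μ • A)) :
    (A - μ⁻¹ • 1)⁻¹ = (-μ) • (1 - μ • A)⁻¹ := by
  rw [sub_inv_smul_one_eq hμ]
  refine inv_eq_right_inv ?_
  rw [Matrix.smul_mul, Matrix.mul_smul, smul_smul,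
    mul_nonsing_inv _ ((isUnit_iff_isUnit_det _).1 h)]
  simp [hμ]

end ShiftInvert

theorem Matrix.conjTranspose_map_ofReal {m n : Type*} (X : Matrix m n ℝ) :
    (X.map ((↑) : ℝ → ℂ))ᴴ = (X.map ((↑) : ℝ → ℂ))ᵀ := by
  ext
  simp

section Balancing

variable {n r : Type*} [Fintype n] [Fintype r] [DecidableEq r] {σ : r → ℝ}

theorem Matrix.isUnit_diagonal_inv_sqrt (hσ : ∀ i, 0 < σ i) :
    IsUnit (diagonal fun i => ((√(σ i))⁻¹ : ℂ)) :=
  isUnit_diagonal.2 <| Pi.isUnit_iff.2 fun i => isUnit_iff_ne_zero.2 <|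
    inv_ne_zero (Complex.ofReal_ne_zero.2 (Real.sqrt_pos.2 (hσ i)).ne')

theorem Matrix.conjTranspose_mul_eq_one_of_svd {Zo Zc : Matrix n r ℂ} {U T : Matrix r r ℂ}
    (hU : U ∈ unitaryGroup r ℂ) (hT : T ∈ unitaryGroup r ℂ) (hσ : ∀ i, 0 < σ i)
    (hsvd : Zoᴴ * Zc = U * diagonal (fun i => (σ i : ℂ)) * Tᴴ) :
    (Zo * U * diagonal fun i => ((√(σ i))⁻¹ : ℂ))ᴴ * (Zc * T * diagonal fun i => ((√(σ i))⁻¹ : ℂ))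
      = 1 := by
  set D := diagonal fun i => ((√(σ i))⁻¹ : ℂ)
  have hDH : Dᴴ = D := by
    simp [D, diagonal_conjTranspose]
  have hDσD : D * diagonal (fun i => (σ i : ℂ)) * D = 1 := by
    rw [diagonal_mul_diagonal, diagonal_mul_diagonal, ← diagonal_one]
    congr 1
    funext i
    have hsqrt : (√(σ i) : ℂ) ≠ 0 := by exact_mod_cast (Real.sqrt_pos.2 (hσ i)).ne'
    have hsq : (σ i : ℂ) = √(σ i) * √(σ i) := by exact_mod_cast (Real.mul_self_sqrt (hσ i).le).symm
    field_simp
    rw [hsq]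
    ring
  have hUU : Uᴴ * U = 1 := mem_unitaryGroup_iff'.1 hU
  have hTT : Tᴴ * T = 1 := mem_unitaryGroup_iff'.1 hT
  calc (Zo * U * D)ᴴ * (Zc * T * D) = D * Uᴴ * (Zoᴴ * Zc) * T * D := by
        simp only [conjTranspose_mul, hDH, Matrix.mul_assoc]
    _ = D * (Uᴴ * U) * diagonal (fun i => (σ i : ℂ)) * (Tᴴ * T) * D := by
        rw [hsvd]
        simp only [Matrix.mul_assoc]
    _ = 1 := by rw [hUU, hTT, Matrix.mul_one, Matrix.mul_one, hDσD]

end Balancing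

theorem Matrix.exists_mul_mul_eq_inv_sub_inv_smul_pow_mul {n ι : Type*} [Fintype n]
    [DecidableEq n] [Fintype ι] [DecidableEq ι] {A : Matrix n n ℂ} {B : Matrix n (Fin 1) ℂ}
    {M : Matrix ι ι ℂ} {H : Matrix n ι ℂ} (hH : H = of (fun i (_ : ι) => B i 0) + A * H * M)
    (hobs : Observable M fun _ => 1) {μ : ℂ} (hμ : μ ≠ 0) {S : ℕ}
    (hdvd : (X - C μ) ^ S ∣ M.charpoly) (hA : IsUnit (1 - μ • A)) {R : Matrix ι ι ℂ}
    (hR : IsUnit R) {k : ℕ} (hk : k < S) :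
    ∃ Y : Matrix ι (Fin 1) ℂ, H * R * Y = (A - μ⁻¹ • 1)⁻¹ ^ (k + 1) * B := by
  have hH' : H = vecMulVec (fun i => B i 0) (fun _ => 1) + A * H * M := by
    convert hH using 2
    ext
    simp [vecMulVec]
  obtain ⟨y, hy⟩ := inv_one_sub_smul_pow_succ_mulVec_mem_range hH' hobs hdvd hA hk
  refine ⟨R⁻¹ * replicateCol (Fin 1) ((-μ) ^ (k + 1) • y), ?_⟩
  rw [Matrix.mul_assoc, mul_nonsing_inv_cancel_left _ _ ((isUnit_iff_isUnit_det _).1 hR),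
    ← replicateCol_mulVec, mulVec_smul, ← Matrix.mulVecLin_apply, hy, inv_sub_inv_smul_one hμ hA,
    _root_.smul_pow, Matrix.smul_mul]
  ext i j
  fin_cases j
  rfl

theorem approximate_balancing_moment_matching_general
    {n m : ℕ}
    (A : Matrix (Fin n) (Fin n) ℝ)
    (C : Matrix (Fin 1) (Fin n) ℝ)
    (Ac : Matrix (Fin n) (Fin n) ℂ) (hAc : Ac = A.map (Complex.ofReal : ℝ → ℂ))
    (Bc : Matrix (Fin n) (Fin 1) ℂ)
    (Cc : Matrix (Fin 1) (Fin n) ℂ) (hCc : Cc = C.map (Complex.ofReal : ℝ → ℂ))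
    -- the matrix Λ̂_c and its spectral data
    {qc : ℕ} (μ : Fin qc → ℂ) (s : Fin qc → ℕ)
    (Λc : Matrix (Fin m) (Fin m) ℂ)
    (hμne : ∀ l, μ l ≠ 0)
    (hcharc : Λc.charpoly = ∏ l : Fin qc, (X - Polynomial.C (μ l)) ^ (s l))
    (hobsc : Observable Λcᵀ fun _ => (1 : ℂ))
    (hinvc : ∀ l, IsUnit (1 - μ l • Ac))
    -- the matrix Λ̂_o and its spectral data
    {qo : ℕ} (ν : Fin qo → ℂ) (t : Fin qo → ℕ)
    (Λo : Matrix (Fin m) (Fin m) ℂ)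
    (hνne : ∀ l, ν l ≠ 0)
    (hcharo : Λo.charpoly = ∏ l : Fin qo, (X - Polynomial.C (ν l)) ^ (t l))
    (hobso : Observable Λoᵀ fun _ => (1 : ℂ))
    (hinvo : ∀ l, IsUnit (1 - ν l • Acᵀ))
    -- the Sylvester-type equations and the (scaled) approximate Cholesky factors
    (Hc : Matrix (Fin n) (Fin m) ℂ)
    (hHc : Hc = (Matrix.of fun i (_ : Fin m) => Bc i 0) + Ac * Hc * Λcᵀ)
    (Dc : Matrix (Fin m) (Fin m) ℂ) (hDc : IsUnit Dc)
    (Zc : Matrix (Fin n) (Fin m) ℂ) (hZc : Zc = Hc * Dc)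
    (Ho : Matrix (Fin n) (Fin m) ℂ)
    (hHo : Ho = (Matrix.of fun i (_ : Fin m) => Cc 0 i) + Acᵀ * Ho * Λoᵀ)
    (Do : Matrix (Fin m) (Fin m) ℂ) (hDo : IsUnit Do)
    (Zo : Matrix (Fin n) (Fin m) ℂ) (hZo : Zo = Ho * Do)
    -- the SVD of Z_oᴴ Z_c and the projection matrices
    (U T : Matrix (Fin m) (Fin m) ℂ) (σ : Fin m → ℝ)
    (hU : U ∈ Matrix.unitaryGroup (Fin m) ℂ)
    (hT : T ∈ Matrix.unitaryGroup (Fin m) ℂ)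
    (hσ : ∀ i, 0 < σ i)
    (hsvd : Zoᴴ * Zc = U * Matrix.diagonal (fun i => (σ i : ℂ)) * Tᴴ)
    (V W : Matrix (Fin n) (Fin m) ℂ)
    (hV : V = Zc * T * Matrix.diagonal (fun i => ((Real.sqrt (σ i))⁻¹ : ℂ)))
    (hW : W = Zo * U * Matrix.diagonal (fun i => ((Real.sqrt (σ i))⁻¹ : ℂ)))
    -- the reduced system
    (Ar : Matrix (Fin m) (Fin m) ℂ) (hAr : Ar = Wᴴ * Ac * V)
    (Br : Matrix (Fin m) (Fin 1) ℂ) (hBr : Br = Wᴴ * Bc)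
    (Cr : Matrix (Fin 1) (Fin m) ℂ) (hCr : Cr = Cc * V)
    (hArc : ∀ l, IsUnit (Ar - (μ l)⁻¹ • 1))
    (hAro : ∀ l, IsUnit (Ar - (starRingEnd ℂ (ν l))⁻¹ • 1)) :
    (∀ l : Fin qc, ∀ j : ℕ, j < s l →
      Cc * ((Ac - (μ l)⁻¹ • 1)⁻¹) ^ (j + 1) * Bc =
        Cr * ((Ar - (μ l)⁻¹ • 1)⁻¹) ^ (j + 1) * Br) ∧
    (∀ l : Fin qo, ∀ j : ℕ, j < t l →
      Cc * ((Ac - (starRingEnd ℂ (ν l))⁻¹ • 1)⁻¹) ^ (j + 1) * Bc =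
        Cr * ((Ar - (starRingEnd ℂ (ν l))⁻¹ • 1)⁻¹) ^ (j + 1) * Br) := by
  set D := diagonal fun i => ((√(σ i))⁻¹ : ℂ)
  have hD : IsUnit D := isUnit_diagonal_inv_sqrt hσ
  have hWV : Wᴴ * V = 1 := by
    rw [hV, hW]
    exact conjTranspose_mul_eq_one_of_svd hU hT hσ hsvd
  have hVH : V = Hc * (Dc * T * D) := by simp only [hV, hZc, Matrix.mul_assoc]
  have hWH : W = Ho * (Do * U * D) := by simp only [hW, hZo, Matrix.mul_assoc]
  have hAcH : Acᴴ = Acᵀ := by rw [hAc]; exact conjTranspose_map_ofReal A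
  have hCcH : Ccᴴ = Ccᵀ := by rw [hCc]; exact conjTranspose_map_ofReal C
  subst hAr hBr hCr
  refine ⟨fun l j hj => ?_, fun l j hj => ?_⟩
  · refine mul_inv_sub_smul_pow_mul_eq_of_exists_mul_eq hWV
      (isUnit_sub_inv_smul_one (hμne l) (hinvc l)) (hArc l) fun i hi => ?_
    rw [hVH]
    exact exists_mul_mul_eq_inv_sub_inv_smul_pow_mul hHc hobsc (hμne l)
      (by rw [charpoly_transpose, hcharc]; exact Finset.dvd_prod_of_mem _ (Finset.mem_univ l))
      (hinvc l) ((hDc.mul (Unitary.isUnit_coe (U := ⟨T, hT⟩))).mul hD) (by omega)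
  · have hν : starRingEnd ℂ (ν l) ≠ 0 := (_root_.map_ne_zero _).2 (hνne l)
    have hinv : IsUnit (1 - starRingEnd ℂ (ν l) • Ac) := by
      simpa [← hAcH, conjTranspose_sub, conjTranspose_smul] using
        (isUnit_conjTranspose _).2 (hinvo l)
    refine mul_inv_sub_smul_pow_mul_eq_of_exists_mul_eq_conjTranspose hWV
      (isUnit_sub_inv_smul_one hν hinv) (hAro l) fun i hi => ?_
    have hstar : star (starRingEnd ℂ (ν l))⁻¹ = (ν l)⁻¹ := by simp
    rw [hWH, hstar]
    exact exists_mul_mul_eq_inv_sub_inv_smul_pow_mul (A := Acᴴ) (B := Ccᴴ)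
      (by rw [hAcH, hCcH]; exact hHo) hobso (hνne l)
      (by rw [charpoly_transpose, hcharo]; exact Finset.dvd_prod_of_mem _ (Finset.mem_univ l))
      (by rw [hAcH]; exact hinvo l) ((hDo.mul (Unitary.isUnit_coe (U := ⟨U, hU⟩))).mul hD)
      (by omega)

/-- Moment matching of the approximate balancing transformation: the moments of the
reduced system `(Ar, Br, Cr)` match those of `(A, B, C)` at the inverse eigenvalues of
`Λ̂_c` (up to their multiplicities) and at the conjugated inverse eigenvalues of `Λ̂_o`. -/
theorem approximate_balancing_moment_matching
    {n m : ℕ} (hmn : m < n)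
    (A : Matrix (Fin n) (Fin n) ℝ) (B : Matrix (Fin n) (Fin 1) ℝ)
    (C : Matrix (Fin 1) (Fin n) ℝ)
    (Ac : Matrix (Fin n) (Fin n) ℂ) (hAc : Ac = A.map (Complex.ofReal : ℝ → ℂ))
    (Bc : Matrix (Fin n) (Fin 1) ℂ) (hBc : Bc = B.map (Complex.ofReal : ℝ → ℂ))
    (Cc : Matrix (Fin 1) (Fin n) ℂ) (hCc : Cc = C.map (Complex.ofReal : ℝ → ℂ))
    -- the matrix Λ̂_c and its spectral data
    {qc : ℕ} (μ : Fin qc → ℂ) (s : Fin qc → ℕ)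
    (Λc : Matrix (Fin m) (Fin m) ℂ)
    (hμinj : Function.Injective μ) (hμne : ∀ l, μ l ≠ 0)
    (hcharc : Λc.charpoly = ∏ l : Fin qc, (X - Polynomial.C (μ l)) ^ (s l))
    (hobsc : Observable Λcᵀ fun _ => (1 : ℂ))
    (hinvc : ∀ l, IsUnit (1 - μ l • Ac))
    -- the matrix Λ̂_o and its spectral data
    {qo : ℕ} (ν : Fin qo → ℂ) (t : Fin qo → ℕ)
    (Λo : Matrix (Fin m) (Fin m) ℂ)
    (hνinj : Function.Injective ν) (hνne : ∀ l, ν l ≠ 0)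
    (hcharo : Λo.charpoly = ∏ l : Fin qo, (X - Polynomial.C (ν l)) ^ (t l))
    (hobso : Observable Λoᵀ fun _ => (1 : ℂ))
    (hinvo : ∀ l, IsUnit (1 - ν l • Acᵀ))
    -- the Sylvester-type equations and the (scaled) approximate Cholesky factors
    (Hc : Matrix (Fin n) (Fin m) ℂ)
    (hHc : Hc = (Matrix.of fun i (_ : Fin m) => Bc i 0) + Ac * Hc * Λcᵀ)
    (Dc : Matrix (Fin m) (Fin m) ℂ) (hDcdiag : Dc.IsDiag) (hDc : IsUnit Dc)
    (Zc : Matrix (Fin n) (Fin m) ℂ) (hZc : Zc = Hc * Dc)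
    (Ho : Matrix (Fin n) (Fin m) ℂ)
    (hHo : Ho = (Matrix.of fun i (_ : Fin m) => Cc 0 i) + Acᵀ * Ho * Λoᵀ)
    (Do : Matrix (Fin m) (Fin m) ℂ) (hDodiag : Do.IsDiag) (hDo : IsUnit Do)
    (Zo : Matrix (Fin n) (Fin m) ℂ) (hZo : Zo = Ho * Do)
    -- the SVD of Z_oᴴ Z_c and the projection matrices
    (hreg : IsUnit (Zoᴴ * Zc))
    (U T : Matrix (Fin m) (Fin m) ℂ) (σ : Fin m → ℝ)
    (hU : U ∈ Matrix.unitaryGroup (Fin m) ℂ)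
    (hT : T ∈ Matrix.unitaryGroup (Fin m) ℂ)
    (hσ : ∀ i, 0 < σ i)
    (hsvd : Zoᴴ * Zc = U * Matrix.diagonal (fun i => (σ i : ℂ)) * Tᴴ)
    (V W : Matrix (Fin n) (Fin m) ℂ)
    (hV : V = Zc * T * Matrix.diagonal (fun i => ((Real.sqrt (σ i))⁻¹ : ℂ)))
    (hW : W = Zo * U * Matrix.diagonal (fun i => ((Real.sqrt (σ i))⁻¹ : ℂ)))
    -- the reduced system
    (Ar : Matrix (Fin m) (Fin m) ℂ) (hAr : Ar = Wᴴ * Ac * V)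
    (Br : Matrix (Fin m) (Fin 1) ℂ) (hBr : Br = Wᴴ * Bc)
    (Cr : Matrix (Fin 1) (Fin m) ℂ) (hCr : Cr = Cc * V)
    (hArc : ∀ l, IsUnit (Ar - (μ l)⁻¹ • 1))
    (hAro : ∀ l, IsUnit (Ar - (starRingEnd ℂ (ν l))⁻¹ • 1)) :
    (∀ l : Fin qc, ∀ j : ℕ, j < s l →
      Cc * ((Ac - (μ l)⁻¹ • 1)⁻¹) ^ (j + 1) * Bc =
        Cr * ((Ar - (μ l)⁻¹ • 1)⁻¹) ^ (j + 1) * Br) ∧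
    (∀ l : Fin qo, ∀ j : ℕ, j < t l →
      Cc * ((Ac - (starRingEnd ℂ (ν l))⁻¹ • 1)⁻¹) ^ (j + 1) * Bc =
        Cr * ((Ar - (starRingEnd ℂ (ν l))⁻¹ • 1)⁻¹) ^ (j + 1) * Br) :=
  approximate_balancing_moment_matching_general A C Ac hAc Bc Cc hCc μ s Λc hμne hcharc hobsc hinvc
    ν t Λo hνne hcharo hobso hinvo Hc hHc Dc hDc Zc hZc Ho hHo Do hDo Zo hZo U T σ hU hT hσ hsvd V W
    hV hW Ar hAr Br hBr Cr hCr hArc hAro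
end

section
/- Let Z_c, Z_o ∈ ℂ^{n×m} and suppose Z_o^H Z_c ∈ ℂ^{m×m} is invertible. Let Z_o^H Z_c = U Σ T^H be a singular value decomposition with U, T ∈ ℂ^{m×m} unitary and Σ diagonal with positive diagonal entries, and define V = Z_c T Σ^{-1/2} and W = Z_o U Σ^{-1/2}. Then W^H V = I_m, the column span of V equals the column span of Z_c, and the column span of W equals the column span of Z_o. -/
/-!
Conjugating `Z_oᴴ Z_c = U Σ Tᴴ` by the unitary factors isolates `Σ`, so
`Wᴴ V = Σ^{-1/2} Uᴴ (Z_oᴴ Z_c) T Σ^{-1/2} = Σ^{-1/2} Σ Σ^{-1/2} = I`.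
`V` and `W` arise from `Z_c` and `Z_o` by right multiplication with invertible
matrices, which does not change the column span.
-/

open Matrix

namespace Matrix

theorem span_range_transpose_mul_of_isUnit {R ι κ : Type*} [CommRing R] [Fintype κ]
    [DecidableEq κ] (A : Matrix ι κ R) {M : Matrix κ κ R} (hM : IsUnit M) :
    Submodule.span R (Set.range (A * M)ᵀ) = Submodule.span R (Set.range Aᵀ) := by
  change Submodule.span R (Set.range (A * M).col) = Submodule.span R (Set.range A.col)
  rw [← range_mulVecLin, ← range_mulVecLin, mulVecLin_mul]
  refine LinearMap.range_comp_of_range_eq_top _ (LinearMap.range_eq_top.mpr fun x => ?_)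
  exact ⟨M⁻¹ *ᵥ x, by rw [mulVecLin_apply, mulVec_mulVec, mul_nonsing_inv M
    ((isUnit_iff_isUnit_det M).mp hM), one_mulVec]⟩

theorem conjTranspose_mul_mul_eq_of_eq_mul_mul_conjTranspose {R ι κ : Type*} [CommRing R]
    [StarRing R] [Fintype ι] [DecidableEq ι] [Fintype κ] [DecidableEq κ] {A S : Matrix ι κ R}
    {U : Matrix ι ι R} {T : Matrix κ κ R} (hU : U ∈ unitaryGroup ι R)
    (hT : T ∈ unitaryGroup κ R)
    (hA : A = U * S * Tᴴ) : Uᴴ * A * T = S := by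
  rw [hA, ← star_eq_conjTranspose, ← star_eq_conjTranspose]
  simp only [Matrix.mul_assoc, Unitary.star_mul_self_of_mem hT, Matrix.mul_one]
  rw [← Matrix.mul_assoc, Unitary.star_mul_self_of_mem hU, Matrix.one_mul]

theorem conjTranspose_diagonal_inv_sqrt {ι : Type*} [DecidableEq ι] (σ : ι → ℝ) :
    (diagonal fun i => ((Real.sqrt (σ i) : ℂ))⁻¹)ᴴ =
      diagonal fun i => ((Real.sqrt (σ i) : ℂ))⁻¹ := by
  simp [diagonal_conjTranspose]

section InvSqrtDiagonal

variable {ι : Type*} [Fintype ι] [DecidableEq ι] {σ : ι → ℝ}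

theorem isUnit_diagonal_inv_sqrt_s6 (hσ : ∀ i, 0 < σ i) :
    IsUnit (diagonal fun i => ((Real.sqrt (σ i) : ℂ))⁻¹) :=
  isUnit_diagonal.mpr <| Pi.isUnit_iff.mpr fun i =>
    (inv_ne_zero (Complex.ofReal_ne_zero.mpr (Real.sqrt_pos.mpr (hσ i)).ne')).isUnit

theorem diagonal_inv_sqrt_mul_diagonal_mul_diagonal_inv_sqrt (hσ : ∀ i, 0 < σ i) :
    (diagonal fun i => ((Real.sqrt (σ i) : ℂ))⁻¹) * diagonal (fun i => (σ i : ℂ)) *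
      (diagonal fun i => ((Real.sqrt (σ i) : ℂ))⁻¹) = 1 := by
  rw [diagonal_mul_diagonal, diagonal_mul_diagonal, ← diagonal_one]
  congr 1
  funext i
  have hsqrt : (Real.sqrt (σ i) : ℂ) ≠ 0 :=
    Complex.ofReal_ne_zero.mpr (Real.sqrt_pos.mpr (hσ i)).ne'
  have hsq : (σ i : ℂ) = (Real.sqrt (σ i) : ℂ) * (Real.sqrt (σ i) : ℂ) := by
    rw [← Complex.ofReal_mul, Real.mul_self_sqrt (hσ i).le]
  rw [hsq]
  field_simp

end InvSqrtDiagonal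

end Matrix

theorem projection_matrices_from_svd_general
    {n m : ℕ} (Zc Zo : Matrix (Fin n) (Fin m) ℂ)
    (U T : Matrix (Fin m) (Fin m) ℂ) (σ : Fin m → ℝ)
    (hU : U ∈ Matrix.unitaryGroup (Fin m) ℂ)
    (hT : T ∈ Matrix.unitaryGroup (Fin m) ℂ)
    (hσ : ∀ i, 0 < σ i)
    (hsvd : Zoᴴ * Zc = U * Matrix.diagonal (fun i => (σ i : ℂ)) * Tᴴ)
    (V W : Matrix (Fin n) (Fin m) ℂ)
    (hV : V = Zc * T * Matrix.diagonal (fun i => ((Real.sqrt (σ i))⁻¹ : ℂ)))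
    (hW : W = Zo * U * Matrix.diagonal (fun i => ((Real.sqrt (σ i))⁻¹ : ℂ))) :
    Wᴴ * V = 1 ∧
    Submodule.span ℂ (Set.range Vᵀ) = Submodule.span ℂ (Set.range Zcᵀ) ∧
    Submodule.span ℂ (Set.range Wᵀ) = Submodule.span ℂ (Set.range Zoᵀ) := by
  have hD : IsUnit (diagonal fun i => ((Real.sqrt (σ i))⁻¹ : ℂ)) :=
    isUnit_diagonal_inv_sqrt_s6 hσ
  have hsvd_diag : Uᴴ * (Zoᴴ * Zc) * T = diagonal fun i => (σ i : ℂ) :=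
    conjTranspose_mul_mul_eq_of_eq_mul_mul_conjTranspose hU hT hsvd
  refine ⟨?_, ?_, ?_⟩
  · calc Wᴴ * V = (diagonal fun i => ((Real.sqrt (σ i))⁻¹ : ℂ))ᴴ *
          (Uᴴ * (Zoᴴ * Zc) * T) * diagonal fun i => ((Real.sqrt (σ i))⁻¹ : ℂ) := by
          simp only [hV, hW, conjTranspose_mul, Matrix.mul_assoc]
      _ = 1 := by
          rw [hsvd_diag, conjTranspose_diagonal_inv_sqrt,
            diagonal_inv_sqrt_mul_diagonal_mul_diagonal_inv_sqrt hσ]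
  · rw [hV, Matrix.mul_assoc]
    exact span_range_transpose_mul_of_isUnit Zc ((Unitary.isUnit_coe (U := ⟨T, hT⟩)).mul hD)
  · rw [hW, Matrix.mul_assoc]
    exact span_range_transpose_mul_of_isUnit Zo ((Unitary.isUnit_coe (U := ⟨U, hU⟩)).mul hD)

/-- Properties of the projection matrices built from an SVD of `Z_oᴴ Z_c`:
`WᴴV = I`, `span(V) = span(Z_c)` and `span(W) = span(Z_o)`. -/
theorem projection_matrices_from_svd
    {n m : ℕ} (Zc Zo : Matrix (Fin n) (Fin m) ℂ)
    (hreg : IsUnit (Zoᴴ * Zc))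
    (U T : Matrix (Fin m) (Fin m) ℂ) (σ : Fin m → ℝ)
    (hU : U ∈ Matrix.unitaryGroup (Fin m) ℂ)
    (hT : T ∈ Matrix.unitaryGroup (Fin m) ℂ)
    (hσ : ∀ i, 0 < σ i)
    (hsvd : Zoᴴ * Zc = U * Matrix.diagonal (fun i => (σ i : ℂ)) * Tᴴ)
    (V W : Matrix (Fin n) (Fin m) ℂ)
    (hV : V = Zc * T * Matrix.diagonal (fun i => ((Real.sqrt (σ i))⁻¹ : ℂ)))
    (hW : W = Zo * U * Matrix.diagonal (fun i => ((Real.sqrt (σ i))⁻¹ : ℂ))) :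
    Wᴴ * V = 1 ∧
    Submodule.span ℂ (Set.range Vᵀ) = Submodule.span ℂ (Set.range Zcᵀ) ∧
    Submodule.span ℂ (Set.range Wᵀ) = Submodule.span ℂ (Set.range Zoᵀ) :=
  projection_matrices_from_svd_general Zc Zo U T σ hU hT hσ hsvd V W hV hW
end

section
/- Let A ∈ ℝ^{n×n}, Λ ∈ ℂ^{s×s}, β ∈ ℂ^s, h_0 ∈ ℝ^n, and let ω_1, ..., ω_N > 0. Suppose matrices H_j ∈ ℂ^{n×s} and vectors h_j ∈ ℂ^n satisfy, for j = 1, ..., N, the recurrences H_j = h_{j-1} 𝟙_s^T + ω_j A H_j Λ^T and h_j = h_{j-1} + ω_j A H_j β. Then the concatenated matrix Ĥ = [H_1, ..., H_N] ∈ ℂ^{n×Ns} satisfies Ĥ = h_0 𝟙_{Ns}^T + A Ĥ Λ̂^T, where Λ̂^T ∈ ℂ^{Ns×Ns} is the block upper triangular matrix whose j-th diagonal block is ω_j Λ^T and whose (i, j) block for i < j is ω_i [β, ..., β] = ω_i β 𝟙_s^T. -/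
/-!
Unrolling the recurrence for `h` gives `h_{j-1} = h_0 + ∑_{p<j} ω_p A H_p β`. Substituting this into
the stage equation `H_j = h_{j-1} 𝟙ᵀ + ω_j A H_j Λᵀ` gives column block `j` of the claimed identity:
the diagonal block of `Λ̂ᵀ` produces `ω_j A H_j Λᵀ`, and the blocks above it produce the sum over `p < j`.
-/

open Matrix

theorem Fin.eq_add_sum_of_succ_eq_add {M : Type*} [AddCommMonoid M] {N : ℕ}
    (h : Fin (N + 1) → M) (d : Fin N → M) (hrec : ∀ j : Fin N, h j.succ = h j.castSucc + d j)
    (j : Fin (N + 1)) : h j = h 0 + ∑ p with p.castSucc < j, d p := by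
  induction j using Fin.induction with
  | zero => simp
  | succ k ih =>
    have hfilter : Finset.univ.filter (fun p : Fin N => p.castSucc < k.succ) =
        insert k (Finset.univ.filter fun p => p.castSucc < k.castSucc) := by
      ext p
      simp only [Finset.mem_insert, Finset.mem_filter, Finset.mem_univ, true_and, Fin.lt_def,
        Fin.val_succ, Fin.val_castSucc, Fin.ext_iff]
      omega
    rw [hrec, ih, hfilter, Finset.sum_insert (by simp), add_assoc, add_comm (d k)]

section BlockMatrices

variable {R m ι s : Type*}

def Matrix.concatCols (H : ι → Matrix m s R) : Matrix m (ι × s) R :=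
  of fun i jl => H jl.1 i jl.2

/-- The matrix `Λ̂ᵀ`, with step sizes `c` in place of `ω`. -/
def Matrix.unrolledStageMatrix [Mul R] [Zero R] [DecidableEq ι] [LT ι]
    [DecidableRel (α := ι) (· < ·)]
    (c : ι → R) (Λ : Matrix s s R) (β : s → R) : Matrix (ι × s) (ι × s) R :=
  of fun ip jq => if ip.1 = jq.1 then c ip.1 * Λᵀ ip.2 jq.2
    else if ip.1 < jq.1 then c ip.1 * β ip.2 else 0

@[simp]
theorem Matrix.concatCols_apply (H : ι → Matrix m s R) (i : m) (j : ι) (l : s) :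
    concatCols H i (j, l) = H j i l :=
  rfl

theorem Matrix.mul_concatCols [NonUnitalNonAssocSemiring R] {k : Type*} [Fintype m]
    (M : Matrix k m R) (H : ι → Matrix m s R) :
    M * concatCols H = concatCols fun j => M * H j := by
  ext i ⟨j, l⟩
  simp [mul_apply]

theorem Matrix.concatCols_mul_unrolledStageMatrix [CommSemiring R] [Fintype ι] [Fintype s]
    [DecidableEq ι] [Preorder ι] [DecidableRel (α := ι) (· < ·)] (G : ι → Matrix m s R) (c : ι → R) (Λ : Matrix s s R)
    (β : s → R) (i : m) (j : ι) (l : s) :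
    (concatCols G * unrolledStageMatrix c Λ β) i (j, l) =
      c j * (G j * Λᵀ) i l + ∑ p with p < j, c p * (G p *ᵥ β) i := by
  have hblock (p : ι) : ∑ q, concatCols G i (p, q) * unrolledStageMatrix c Λ β (p, q) (j, l) =
      (if p = j then c j * (G j * Λᵀ) i l else 0) + (if p < j then c p * (G p *ᵥ β) i else 0) := by
    rcases eq_or_ne p j with rfl | hne
    · simp [unrolledStageMatrix, mul_apply, Finset.mul_sum, mul_left_comm]
    · by_cases hlt : p < j <;>
        simp [unrolledStageMatrix, hne, hlt, mulVec, dotProduct, Finset.mul_sum, mul_left_comm]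
  rw [mul_apply, Fintype.sum_prod_type, Finset.sum_congr rfl fun p _ => hblock p,
    Finset.sum_add_distrib, Finset.sum_ite_eq', Finset.sum_filter]
  simp

end BlockMatrices

theorem runge_kutta_unrolled_block_equation_general
    {n s N : ℕ} (A : Matrix (Fin n) (Fin n) ℝ)
    (Λ : Matrix (Fin s) (Fin s) ℂ) (β : Fin s → ℂ)
    (ω : Fin N → ℝ)
    (H : Fin N → Matrix (Fin n) (Fin s) ℂ) (h : Fin (N + 1) → Fin n → ℂ)
    (hrecH : ∀ j : Fin N,
      H j = (Matrix.of fun i (_ : Fin s) => h j.castSucc i) +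
        (ω j : ℂ) • (A.map (Complex.ofReal : ℝ → ℂ) * H j * Λᵀ))
    (hrech : ∀ j : Fin N,
      h j.succ = h j.castSucc +
        (ω j : ℂ) • ((A.map (Complex.ofReal : ℝ → ℂ) * H j) *ᵥ β)) :
    (Matrix.of fun i (jl : Fin N × Fin s) => H jl.1 i jl.2) =
      (Matrix.of fun i (_ : Fin N × Fin s) => h 0 i) +
        A.map (Complex.ofReal : ℝ → ℂ) *
          (Matrix.of fun i (jl : Fin N × Fin s) => H jl.1 i jl.2) *
          (Matrix.of fun (ip : Fin N × Fin s) (jq : Fin N × Fin s) =>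
            if ip.1 = jq.1 then (ω ip.1 : ℂ) * Λᵀ ip.2 jq.2
            else if ip.1 < jq.1 then (ω ip.1 : ℂ) * β ip.2 else 0) := by
  set Ac := A.map (Complex.ofReal : ℝ → ℂ)
  change concatCols H = _ + Ac * concatCols H * unrolledStageMatrix (fun j => (ω j : ℂ)) Λ β
  ext i ⟨j, l⟩
  have hprev := congrFun (Fin.eq_add_sum_of_succ_eq_add h _ hrech j.castSucc) i
  simp only [Fin.castSucc_lt_castSucc_iff, Pi.add_apply, Finset.sum_apply, Pi.smul_apply,
    smul_eq_mul] at hprev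
  rw [mul_concatCols, Matrix.add_apply, concatCols_mul_unrolledStageMatrix]
  calc concatCols H i (j, l) = h j.castSucc i + ω j * (Ac * H j * Λᵀ) i l := by
        simpa using congrFun₂ (hrecH j) i l
    _ = _ := by rw [hprev, of_apply, add_assoc, add_comm (∑ _ with _, _)]

/-- Unrolling `N` steps of a Runge-Kutta recurrence into a single block equation:
the concatenation `Ĥ = [H_1, …, H_N]` satisfies `Ĥ = h₀𝟙ᵀ + AĤΛ̂ᵀ` where `Λ̂ᵀ` is
block upper triangular with diagonal blocks `ω_j Λᵀ` and off-diagonal blocks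
`ω_i β𝟙ᵀ` (for block position `(i,j)`, `i < j`). -/
theorem runge_kutta_unrolled_block_equation
    {n s N : ℕ} (A : Matrix (Fin n) (Fin n) ℝ)
    (Λ : Matrix (Fin s) (Fin s) ℂ) (β : Fin s → ℂ)
    (ω : Fin N → ℝ) (hω : ∀ j, 0 < ω j)
    (H : Fin N → Matrix (Fin n) (Fin s) ℂ) (h : Fin (N + 1) → Fin n → ℂ)
    (hrecH : ∀ j : Fin N,
      H j = (Matrix.of fun i (_ : Fin s) => h j.castSucc i) +
        (ω j : ℂ) • (A.map (Complex.ofReal : ℝ → ℂ) * H j * Λᵀ))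
    (hrech : ∀ j : Fin N,
      h j.succ = h j.castSucc +
        (ω j : ℂ) • ((A.map (Complex.ofReal : ℝ → ℂ) * H j) *ᵥ β)) :
    (Matrix.of fun i (jl : Fin N × Fin s) => H jl.1 i jl.2) =
      (Matrix.of fun i (_ : Fin N × Fin s) => h 0 i) +
        A.map (Complex.ofReal : ℝ → ℂ) *
          (Matrix.of fun i (jl : Fin N × Fin s) => H jl.1 i jl.2) *
          (Matrix.of fun (ip : Fin N × Fin s) (jq : Fin N × Fin s) =>
            if ip.1 = jq.1 then (ω ip.1 : ℂ) * Λᵀ ip.2 jq.2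
            else if ip.1 < jq.1 then (ω ip.1 : ℂ) * β ip.2 else 0) :=
  runge_kutta_unrolled_block_equation_general A Λ β ω H h hrecH hrech
end

section
/- Let A ∈ ℝ^{n×n}, Λ ∈ ℂ^{s×s}, h ∈ ℂ^n and ω > 0. Let S ∈ ℂ^{s×s} be invertible such that (Λ')^T := S Λ^T S^{-1} is upper triangular with diagonal entries μ_1, ..., μ_s (the eigenvalues of Λ), and set (α_1, ..., α_s) := 𝟙_s^T S^{-1}. Assume I_n − ω μ_i A is invertible for each i = 1, ..., s. Then a matrix H ∈ ℂ^{n×s} satisfies H = h 𝟙_s^T + ω A H Λ^T if and only if H = H' S where H' = [h'_1, ..., h'_s] ∈ ℂ^{n×s} is the unique solution of the triangular chain of linear systems (I_n − ω μ_i A) h'_i = α_i h + ω Σ_{l=1}^{i-1} λ'_{il} A h'_l for i = 1, ..., s, with λ'_{il} the entries of Λ' = (S Λ^T S^{-1})^T. -/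
/-!
Right multiplication by `S⁻¹` turns the stage equation for `H` into `X = h αᵀ + ω A X T` for
`X = H S⁻¹`, where `T = S Λᵀ S⁻¹` is upper triangular. Column `i` of `A X T` only involves the
columns `l ≤ i` of `X`, so read column by column this equation is exactly the triangular chain.
Since every `I − ω μᵢ A` is invertible, induction over the columns shows that the homogeneous
equation has only the zero solution, and the affine equation then has a unique solution by
finite dimensionality.
-/

open Matrix

namespace Matrix

variable {m ι : Type*} [Fintype m] [Fintype ι]

section CommRing

variable {R : Type*} [CommRing R]

theorem eq_add_smul_mul_mul_iff_mul_inv [DecidableEq ι] {S : Matrix ι ι R} (hS : IsUnit S)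
    (M : Matrix m m R) (c : R) (B : Matrix ι ι R) (C H : Matrix m ι R) :
    H = C + c • (M * H * B) ↔ H * S⁻¹ = C * S⁻¹ + c • (M * (H * S⁻¹) * (S * B * S⁻¹)) := by
  have hSdet : IsUnit S.det := (isUnit_iff_isUnit_det S).mp hS
  have hconj : M * (H * S⁻¹) * (S * B * S⁻¹) = M * H * B * S⁻¹ := by
    simp only [Matrix.mul_assoc, nonsing_inv_mul_cancel_left _ _ hSdet]
  rw [hconj, ← smul_mul c (M * H * B), ← Matrix.add_mul]
  exact ⟨fun hH => hH ▸ rfl, fun hH => by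
    simpa only [nonsing_inv_mul_cancel_right _ _ hSdet] using congrArg (· * S) hH⟩

variable [LinearOrder ι] [LocallyFiniteOrderBot ι]

theorem col_mul_mul_of_blockTriangular {T : Matrix ι ι R} (hT : T.BlockTriangular id)
    (M : Matrix m m R) (X : Matrix m ι R) (i : ι) :
    (fun r => (M * X * T) r i) =
      T i i • (M *ᵥ fun r => X r i) + ∑ l ∈ Finset.Iio i, T l i • (M *ᵥ fun r => X r l) := by
  have hcol : (fun r => (M * X * T) r i) = ∑ l, T l i • (M *ᵥ fun r => X r l) := by
    ext r
    simp only [mul_apply, mulVec, dotProduct, Finset.sum_apply, Pi.smul_apply, smul_eq_mul,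
      Finset.sum_mul, Finset.mul_sum]
    exact Finset.sum_congr rfl fun _ _ => Finset.sum_congr rfl fun _ _ => by ring
  have hsupp : ∑ l, T l i • (M *ᵥ fun r => X r l) =
      ∑ l ∈ Finset.Iic i, T l i • (M *ᵥ fun r => X r l) :=
    (Finset.sum_subset (Finset.subset_univ _) fun l _ hl => by
      rw [hT (by simpa using hl : i < l), zero_smul]).symm
  rw [hcol, hsupp, ← Finset.Iio_insert, Finset.sum_insert Finset.notMem_Iio_self]

variable [DecidableEq m]

theorem col_eq_add_smul_mul_mul_iff {T : Matrix ι ι R} (hT : T.BlockTriangular id)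
    (M : Matrix m m R) (c : R) (C X : Matrix m ι R) (i : ι) :
    (fun r => X r i) = (fun r => C r i) + c • (fun r => (M * X * T) r i) ↔
      (1 - (c * T i i) • M) *ᵥ (fun r => X r i) =
        (fun r => C r i) + c • ∑ l ∈ Finset.Iio i, T l i • (M *ᵥ fun r => X r l) := by
  rw [col_mul_mul_of_blockTriangular hT, sub_mulVec, one_mulVec, smul_mulVec, smul_add,
    mul_smul, sub_eq_iff_eq_add, add_comm (c • T i i • _), ← add_assoc]

theorem eq_vecMulVec_add_smul_mul_mul_iff {T : Matrix ι ι R} (hT : T.BlockTriangular id)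
    (M : Matrix m m R) (c : R) (h : m → R) (α : ι → R) (X : Matrix m ι R) :
    X = vecMulVec h α + c • (M * X * T) ↔
      ∀ i, (1 - (c * T i i) • M) *ᵥ (fun r => X r i) =
        α i • h + c • ∑ l ∈ Finset.Iio i, T l i • (M *ᵥ fun r => X r l) := by
  have hcol : ∀ i, (fun r => vecMulVec h α r i) = α i • h := fun i => by
    ext r
    simp [vecMulVec_apply, mul_comm]
  simp_rw [← hcol, ← col_eq_add_smul_mul_mul_iff hT, ← Matrix.ext_iff, funext_iff]
  exact forall_comm

theorem eq_zero_of_eq_smul_mul_mul {T : Matrix ι ι R} (hT : T.BlockTriangular id)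
    {M : Matrix m m R} {c : R} (hM : ∀ i, IsUnit (1 - (c * T i i) • M)) {D : Matrix m ι R}
    (hD : D = c • (M * D * T)) : D = 0 := by
  suffices hcol : ∀ i, (fun r => D r i) = 0 from ext fun r i => congrFun (hcol i) r
  intro i
  induction i using WellFoundedLT.induction with
  | ind i ih =>
    have hchain := (col_eq_add_smul_mul_mul_iff hT M c 0 D i).mp
      (by ext r; simpa using congrFun (congrFun hD r) i)
    rw [Finset.sum_eq_zero fun l hl => by
      rw [ih l (Finset.mem_Iio.mp hl), mulVec_zero, smul_zero]] at hchain
    exact mulVec_injective_of_isUnit (hM i) (hchain.trans (by ext; simp))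

end CommRing

theorem existsUnique_eq_add_smul_mul_mul {K : Type*} [Field K] [DecidableEq m] [LinearOrder ι]
    [LocallyFiniteOrderBot ι] {T : Matrix ι ι K} (hT : T.BlockTriangular id)
    {M : Matrix m m K} {c : K} (hM : ∀ i, IsUnit (1 - (c * T i i) • M)) (C : Matrix m ι K) :
    ∃! X : Matrix m ι K, X = C + c • (M * X * T) := by
  let L : Matrix m ι K →ₗ[K] Matrix m ι K :=
    LinearMap.id - c • (mulRightLinearMap m K T ∘ₗ mulLeftLinearMap ι K M)
  have hL : ∀ X, L X = X - c • (M * X * T) := fun _ => rfl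
  have hLinj : Function.Injective L := by
    refine (injective_iff_map_eq_zero L).mpr fun D hD => eq_zero_of_eq_smul_mul_mul hT hM ?_
    rwa [hL, sub_eq_zero] at hD
  obtain ⟨X, hX⟩ := LinearMap.injective_iff_surjective.mp hLinj C
  refine ⟨X, ?_, fun Y hY => hLinj ?_⟩
  · show X = C + _
    rw [← hX, hL, sub_add_cancel]
  · rw [hX, hL, sub_eq_iff_eq_add', add_comm]
    exact hY

end Matrix

theorem stage_equation_schur_decomposition_general
    {n s : ℕ} (Λ : Matrix (Fin s) (Fin s) ℂ)
    (h : Fin n → ℂ) (ω : ℝ)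
    (Ac : Matrix (Fin n) (Fin n) ℂ)
    (S : Matrix (Fin s) (Fin s) ℂ) (hS : IsUnit S)
    (htri : Matrix.BlockTriangular (S * Λᵀ * S⁻¹) id)
    (μ : Fin s → ℂ) (hμ : ∀ i, μ i = (S * Λᵀ * S⁻¹) i i)
    (α : Fin s → ℂ) (hα : α = (fun _ => (1 : ℂ)) ᵥ* S⁻¹)
    (Λ' : Matrix (Fin s) (Fin s) ℂ) (hΛ' : Λ' = (S * Λᵀ * S⁻¹)ᵀ)
    (hinv : ∀ i, IsUnit (1 - ((ω : ℂ) * μ i) • Ac)) :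
    (∃! H' : Matrix (Fin n) (Fin s) ℂ, ∀ i : Fin s,
      (1 - ((ω : ℂ) * μ i) • Ac) *ᵥ (fun r => H' r i) =
        α i • h + (ω : ℂ) • ∑ l ∈ Finset.Iio i, Λ' i l • (Ac *ᵥ fun r => H' r l)) ∧
    (∀ H : Matrix (Fin n) (Fin s) ℂ,
      (H = (Matrix.of fun i (_ : Fin s) => h i) + (ω : ℂ) • (Ac * H * Λᵀ)) ↔
      (∃ H' : Matrix (Fin n) (Fin s) ℂ,
        (∀ i : Fin s,
          (1 - ((ω : ℂ) * μ i) • Ac) *ᵥ (fun r => H' r i) =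
            α i • h + (ω : ℂ) • ∑ l ∈ Finset.Iio i, Λ' i l • (Ac *ᵥ fun r => H' r l)) ∧
        H = H' * S)) := by
  have hSdet : IsUnit S.det := (isUnit_iff_isUnit_det S).mp hS
  simp only [hμ] at hinv ⊢
  subst hΛ'
  have hchain := fun H' => (eq_vecMulVec_add_smul_mul_mul_iff htri Ac ω h α H').symm
  have hstage : ∀ H : Matrix (Fin n) (Fin s) ℂ,
      H = (of fun i (_ : Fin s) => h i) + (ω : ℂ) • (Ac * H * Λᵀ) ↔
        H * S⁻¹ = vecMulVec h α + (ω : ℂ) • (Ac * (H * S⁻¹) * (S * Λᵀ * S⁻¹)) := fun H => by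
    rw [eq_add_smul_mul_mul_iff_mul_inv hS, hα, ← vecMulVec_mul, ← Pi.one_def,
      vecMulVec_one]
    rfl
  refine ⟨(existsUnique_congr hchain).mpr (existsUnique_eq_add_smul_mul_mul htri hinv _),
    fun H => (hstage H).trans ⟨fun hH => ⟨H * S⁻¹, (hchain _).mpr hH, ?_⟩, ?_⟩⟩
  · rw [nonsing_inv_mul_cancel_right _ _ hSdet]
  · rintro ⟨H', hH', rfl⟩
    rw [mul_nonsing_inv_cancel_right _ _ hSdet]
    exact (hchain H').mp hH'

/-- Solving the stage equation `H = h𝟙ᵀ + ωAHΛᵀ` via a Schur decomposition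
`(Λ')ᵀ = SΛᵀS⁻¹`: `H` solves the stage equation iff `H = H'S` where the columns of
`H'` solve the triangular chain `(I − ωμᵢA)h'ᵢ = αᵢh + ω ∑_{l<i} λ'ᵢₗ A h'ₗ`,
which has a unique solution. -/
theorem stage_equation_schur_decomposition
    {n s : ℕ} (A : Matrix (Fin n) (Fin n) ℝ) (Λ : Matrix (Fin s) (Fin s) ℂ)
    (h : Fin n → ℂ) (ω : ℝ) (hω : 0 < ω)
    (Ac : Matrix (Fin n) (Fin n) ℂ) (hAc : Ac = A.map (Complex.ofReal : ℝ → ℂ))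
    (S : Matrix (Fin s) (Fin s) ℂ) (hS : IsUnit S)
    (htri : Matrix.BlockTriangular (S * Λᵀ * S⁻¹) id)
    (μ : Fin s → ℂ) (hμ : ∀ i, μ i = (S * Λᵀ * S⁻¹) i i)
    (α : Fin s → ℂ) (hα : α = (fun _ => (1 : ℂ)) ᵥ* S⁻¹)
    (Λ' : Matrix (Fin s) (Fin s) ℂ) (hΛ' : Λ' = (S * Λᵀ * S⁻¹)ᵀ)
    (hinv : ∀ i, IsUnit (1 - ((ω : ℂ) * μ i) • Ac)) :
    (∃! H' : Matrix (Fin n) (Fin s) ℂ, ∀ i : Fin s,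
      (1 - ((ω : ℂ) * μ i) • Ac) *ᵥ (fun r => H' r i) =
        α i • h + (ω : ℂ) • ∑ l ∈ Finset.Iio i, Λ' i l • (Ac *ᵥ fun r => H' r l)) ∧
    (∀ H : Matrix (Fin n) (Fin s) ℂ,
      (H = (Matrix.of fun i (_ : Fin s) => h i) + (ω : ℂ) • (Ac * H * Λᵀ)) ↔
      (∃ H' : Matrix (Fin n) (Fin s) ℂ,
        (∀ i : Fin s,
          (1 - ((ω : ℂ) * μ i) • Ac) *ᵥ (fun r => H' r i) =
            α i • h + (ω : ℂ) • ∑ l ∈ Finset.Iio i, Λ' i l • (Ac *ᵥ fun r => H' r l)) ∧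
        H = H' * S)) :=
  stage_equation_schur_decomposition_general Λ h ω Ac S hS htri μ hμ α hα Λ' hΛ' hinv
end

section
/- Let A ∈ ℝ^{n×n}, B ∈ ℝ^{n×1}, C ∈ ℝ^{1×n}, and let V, W ∈ ℂ^{n×r} satisfy W^H V = I_r. Let s_0 ∈ ℂ be such that A − s_0 I_n is invertible, and suppose (A − s_0 I_n)^{-i} B lies in the column span of V for i = 1, ..., k. Define the reduced system Â = W^H A V, B̂ = W^H B, Ĉ = C V, and assume Â − s_0 I_r is invertible. Then the first k moments at s_0 coincide: C (A − s_0 I_n)^{-(j+1)} B = Ĉ (Â − s_0 I_r)^{-(j+1)} B̂ for j = 0, ..., k−1. -/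
/-!
Put `E = A − s₀I`, `x_i = E⁻ⁱB` and `Ê = Wᴴ E V = Â − s₀I`. By induction on `i ≤ k`,
`Wᴴ x_i = Ê⁻ⁱ B̂`: writing `x_{i+1} = V y` and applying `Wᴴ` to `E V y = x_i` gives
`Ê y = Wᴴ x_i`, so `y = Ê⁻ⁱ⁻¹ B̂`, and `Wᴴ x_{i+1} = Wᴴ V y = y`. Hence
`x_{j+1} = V Ê⁻ʲ⁻¹ B̂`, and multiplying by `C` on the left matches the moments.
-/

open Matrix

namespace Matrix

variable {K : Type*} [CommRing K] {n r m : Type*}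

theorem exists_eq_mul_of_mem_span_cols [Fintype r] (V : Matrix n r K)
    (x : Matrix n (Fin 1) K)
    (hx : (fun i => x i 0) ∈ Submodule.span K (Set.range Vᵀ)) :
    ∃ y : Matrix r (Fin 1) K, x = V * y := by
  rw [← Matrix.col, ← range_mulVecLin] at hx
  obtain ⟨y, hy⟩ := hx
  refine ⟨replicateCol (Fin 1) y, ?_⟩
  rw [← replicateCol_mulVec, ← mulVecLin_apply, hy]
  ext i j
  rw [Subsingleton.elim j 0]
  rfl

theorem left_inv_mul_sub_smul_mul [Fintype n] [DecidableEq n] [DecidableEq r]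
    {L : Matrix r n K} {V : Matrix n r K} (hLV : L * V = 1)
    (A : Matrix n n K) (s : K) : L * (A - s • 1) * V = L * A * V - s • 1 := by
  rw [Matrix.mul_sub, Matrix.sub_mul, Matrix.mul_smul, Matrix.smul_mul, Matrix.mul_one, hLV]

theorem eq_nonsing_inv_mul_of_mul_mul_eq [Fintype n] [Fintype r] [DecidableEq r]
    {L : Matrix r n K} {E : Matrix n n K} {V : Matrix n r K} (hE : IsUnit (L * E * V).det)
    {y : Matrix r m K} {x : Matrix n m K}
    (h : E * (V * y) = x) : y = (L * E * V)⁻¹ * (L * x) := by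
  rw [← h, ← Matrix.mul_assoc L, ← Matrix.mul_assoc (L * E)]
  exact (nonsing_inv_mul_cancel_left _ y hE).symm

variable [Fintype n] [DecidableEq n] [Fintype r] [DecidableEq r]
  {L : Matrix r n K} {V : Matrix n r K} {E : Matrix n n K} {B : Matrix n m K} {k : ℕ}

theorem left_inv_mul_inv_pow_mul (hLV : L * V = 1) (hE : IsUnit E.det)
    (hEr : IsUnit (L * E * V).det)
    (hrange : ∀ i, 1 ≤ i → i ≤ k → ∃ y : Matrix r m K, E⁻¹ ^ i * B = V * y) :
    ∀ i ≤ k, L * (E⁻¹ ^ i * B) = (L * E * V)⁻¹ ^ i * (L * B) := by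
  intro i
  induction i with
  | zero => simp
  | succ i ih =>
    intro hik
    obtain ⟨y, hy⟩ := hrange (i + 1) (by omega) hik
    have hstep : E * (V * y) = E⁻¹ ^ i * B := by
      rw [← hy, pow_succ', Matrix.mul_assoc, mul_nonsing_inv_cancel_left _ _ hE]
    rw [hy, ← Matrix.mul_assoc, hLV, Matrix.one_mul, eq_nonsing_inv_mul_of_mul_mul_eq hEr hstep,
      ih (by omega), pow_succ', ← Matrix.mul_assoc]

theorem inv_pow_mul_eq_mul_reduced (hLV : L * V = 1) (hE : IsUnit E.det)
    (hEr : IsUnit (L * E * V).det)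
    (hrange : ∀ i, 1 ≤ i → i ≤ k → ∃ y : Matrix r m K, E⁻¹ ^ i * B = V * y)
    {i : ℕ} (hi : 1 ≤ i) (hik : i ≤ k) :
    E⁻¹ ^ i * B = V * ((L * E * V)⁻¹ ^ i * (L * B)) := by
  obtain ⟨y, hy⟩ := hrange i hi hik
  have hproj : V * (L * (E⁻¹ ^ i * B)) = E⁻¹ ^ i * B := by
    rw [hy, ← Matrix.mul_assoc L, hLV, Matrix.one_mul]
  rw [← hproj, left_inv_mul_inv_pow_mul hLV hE hEr hrange i hik]

end Matrix

theorem moment_matching_one_sided_general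
    {n r k : ℕ}
    (Ac : Matrix (Fin n) (Fin n) ℂ)
    (Bc : Matrix (Fin n) (Fin 1) ℂ)
    (Cc : Matrix (Fin 1) (Fin n) ℂ)
    (V W : Matrix (Fin n) (Fin r) ℂ) (hWV : Wᴴ * V = 1)
    (s₀ : ℂ) (hinv : IsUnit (Ac - s₀ • 1))
    (hspan : ∀ i : ℕ, 1 ≤ i → i ≤ k →
      (fun row => (((Ac - s₀ • 1)⁻¹) ^ i * Bc) row 0) ∈
        Submodule.span ℂ (Set.range Vᵀ))
    (Ar : Matrix (Fin r) (Fin r) ℂ) (hAr : Ar = Wᴴ * Ac * V)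
    (Br : Matrix (Fin r) (Fin 1) ℂ) (hBr : Br = Wᴴ * Bc)
    (Cr : Matrix (Fin 1) (Fin r) ℂ) (hCr : Cr = Cc * V)
    (hinvr : IsUnit (Ar - s₀ • 1)) :
    ∀ j : ℕ, j < k →
      Cc * ((Ac - s₀ • 1)⁻¹) ^ (j + 1) * Bc =
        Cr * ((Ar - s₀ • 1)⁻¹) ^ (j + 1) * Br := by
  intro j hj
  have hreduced : Wᴴ * (Ac - s₀ • 1) * V = Ar - s₀ • 1 := by
    rw [hAr, left_inv_mul_sub_smul_mul hWV]
  rw [isUnit_iff_isUnit_det] at hinv hinvr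
  rw [← hreduced] at hinvr
  have hmatch := inv_pow_mul_eq_mul_reduced hWV hinv hinvr
    (fun i hi hik => exists_eq_mul_of_mem_span_cols V _ (hspan i hi hik))
    (Nat.succ_pos j) hj
  rw [hCr, hBr, ← hreduced, Matrix.mul_assoc, hmatch]
  simp only [Matrix.mul_assoc]

/-- One-sided rational interpolation: if `(A − s₀I)⁻ⁱB ∈ span(V)` for `i = 1, …, k`,
then the first `k` moments at `s₀` of the original and the reduced system coincide. -/
theorem moment_matching_one_sided
    {n r k : ℕ} (A : Matrix (Fin n) (Fin n) ℝ) (B : Matrix (Fin n) (Fin 1) ℝ)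
    (C : Matrix (Fin 1) (Fin n) ℝ)
    (Ac : Matrix (Fin n) (Fin n) ℂ) (hAc : Ac = A.map (Complex.ofReal : ℝ → ℂ))
    (Bc : Matrix (Fin n) (Fin 1) ℂ) (hBc : Bc = B.map (Complex.ofReal : ℝ → ℂ))
    (Cc : Matrix (Fin 1) (Fin n) ℂ) (hCc : Cc = C.map (Complex.ofReal : ℝ → ℂ))
    (V W : Matrix (Fin n) (Fin r) ℂ) (hWV : Wᴴ * V = 1)
    (s₀ : ℂ) (hinv : IsUnit (Ac - s₀ • 1))
    (hspan : ∀ i : ℕ, 1 ≤ i → i ≤ k →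
      (fun row => (((Ac - s₀ • 1)⁻¹) ^ i * Bc) row 0) ∈
        Submodule.span ℂ (Set.range Vᵀ))
    (Ar : Matrix (Fin r) (Fin r) ℂ) (hAr : Ar = Wᴴ * Ac * V)
    (Br : Matrix (Fin r) (Fin 1) ℂ) (hBr : Br = Wᴴ * Bc)
    (Cr : Matrix (Fin 1) (Fin r) ℂ) (hCr : Cr = Cc * V)
    (hinvr : IsUnit (Ar - s₀ • 1)) :
    ∀ j : ℕ, j < k →
      Cc * ((Ac - s₀ • 1)⁻¹) ^ (j + 1) * Bc =
        Cr * ((Ar - s₀ • 1)⁻¹) ^ (j + 1) * Br :=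
  moment_matching_one_sided_general Ac Bc Cc V W hWV s₀ hinv hspan Ar hAr Br hBr Cr hCr hinvr
end

section
/- Let A ∈ ℝ^{n×n}, B ∈ ℝ^{n×1}, C ∈ ℝ^{1×n}, and let V, W ∈ ℂ^{n×r} satisfy W^H V = I_r. Let s_0 ∈ ℂ be such that A − s_0 I_n is invertible. Suppose (A − s_0 I_n)^{-i} B lies in the column span of V for i = 1, ..., k, and (A^T − conj(s_0) I_n)^{-i} C^T lies in the column span of W for i = 1, ..., k. Define Â = W^H A V, B̂ = W^H B, Ĉ = C V, and assume Â − s_0 I_r is invertible. Then the first 2k moments at s_0 coincide: C (A − s_0 I_n)^{-(j+1)} B = Ĉ (Â − s_0 I_r)^{-(j+1)} B̂ for j = 0, ..., 2k−1. -/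
/-!
Write `E = A - s₀ I` and `Eᵣ = Wᴴ E V = Â - s₀ I`. If `E^{-i} B = V Xᵢ` for `1 ≤ i ≤ k`, then
`Eᵣ X_{i+1} = Wᴴ E E^{-(i+1)} B = Wᴴ E^{-i} B`, so `Wᴴ E^{-i} B = Eᵣ^{-i} B̂` by induction. Dually
`C E^{-i} V = Ĉ Eᵣ^{-i}`: for a real system the condition on `W` says exactly that `(C E^{-i})ᴴ`
lies in the span of `W`. A moment of order `j + 1 ≤ 2k` splits as `(C E^{-p}) (E^{-q} B)` with
`p ≤ k` and `1 ≤ q ≤ k`, and the two halves meet through `Wᴴ V = 1`.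
-/

open Matrix

namespace Matrix

theorem exists_eq_mul_of_col_mem_span_range_transpose {R n r : Type*} [CommRing R] [Fintype r]
    (V : Matrix n r R) (b : Matrix n (Fin 1) R)
    (h : (fun row => b row 0) ∈ Submodule.span R (Set.range Vᵀ)) :
    ∃ X : Matrix r (Fin 1) R, b = V * X := by
  obtain ⟨c, hc⟩ := (Submodule.mem_span_range_iff_exists_fun R).mp h
  refine ⟨of fun i _ => c i, ?_⟩
  ext row o
  rw [Subsingleton.elim o 0, ← congrFun hc row]
  simp [mul_apply, mul_comm]

theorem conjTranspose_map_ofReal_s15 {m n : Type*} (A : Matrix m n ℝ) :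
    (A.map (Complex.ofReal : ℝ → ℂ))ᴴ = (A.map Complex.ofReal)ᵀ := by
  rw [← conjTranspose_map _ fun x => (Complex.conj_ofReal x).symm,
    conjTranspose_eq_transpose_of_trivial, transpose_map]

section KrylovProjection

variable {R n r ι : Type*} [CommRing R] [Fintype n] [DecidableEq n] [Fintype r] [DecidableEq r]
  {V : Matrix n r R} {Q : Matrix r n R} {E : Matrix n n R}

theorem mul_inv_pow_mul_eq_of_krylov_range (hQV : Q * V = 1) (hE : IsUnit E.det)
    (hEr : IsUnit (Q * E * V).det) (b : Matrix n ι R) :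
    ∀ m : ℕ, (∀ i, 1 ≤ i → i ≤ m → ∃ X : Matrix r ι R, E⁻¹ ^ i * b = V * X) →
      Q * (E⁻¹ ^ m * b) = (Q * E * V)⁻¹ ^ m * (Q * b)
  | 0, _ => by simp
  | m + 1, hb => by
    obtain ⟨X, hX⟩ := hb (m + 1) le_add_self le_rfl
    have hQX : Q * (E⁻¹ ^ (m + 1) * b) = X := by rw [hX, ← Matrix.mul_assoc, hQV, Matrix.one_mul]
    have hErX : Q * E * V * X = (Q * E * V)⁻¹ ^ m * (Q * b) := by
      calc Q * E * V * X = Q * (E * (E⁻¹ * (E⁻¹ ^ m * b))) := by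
            rw [Matrix.mul_assoc, ← hX, pow_succ', Matrix.mul_assoc, Matrix.mul_assoc]
        _ = Q * (E⁻¹ ^ m * b) := by rw [mul_nonsing_inv_cancel_left _ _ hE]
        _ = (Q * E * V)⁻¹ ^ m * (Q * b) :=
            mul_inv_pow_mul_eq_of_krylov_range hQV hE hEr b m
              fun i h₁ h₂ => hb i h₁ (h₂.trans m.le_succ)
    rw [hQX, ← nonsing_inv_mul_cancel_left _ X hEr, hErX, pow_succ', ← Matrix.mul_assoc]

theorem mul_inv_pow_mul_eq_of_krylov_range_left (hQV : Q * V = 1) (hE : IsUnit E.det)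
    (hEr : IsUnit (Q * E * V).det) (c : Matrix ι n R) (m : ℕ)
    (hc : ∀ i, 1 ≤ i → i ≤ m → ∃ Y : Matrix ι r R, c * E⁻¹ ^ i = Y * Q) :
    c * E⁻¹ ^ m * V = c * V * (Q * E * V)⁻¹ ^ m := by
  have hred : Vᵀ * Eᵀ * Qᵀ = (Q * E * V)ᵀ := by simp only [transpose_mul, Matrix.mul_assoc]
  have key := mul_inv_pow_mul_eq_of_krylov_range (V := Qᵀ) (Q := Vᵀ) (E := Eᵀ)
    (by rw [← transpose_mul, hQV, transpose_one]) (by rwa [det_transpose])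
    (by rwa [hred, det_transpose]) cᵀ m fun i h₁ h₂ => by
      obtain ⟨Y, hY⟩ := hc i h₁ h₂
      exact ⟨Yᵀ, by rw [← transpose_nonsing_inv, ← transpose_pow, ← transpose_mul, hY,
        transpose_mul]⟩
  apply transpose_injective
  rw [hred] at key
  simpa only [transpose_mul, transpose_pow, transpose_nonsing_inv, Matrix.mul_assoc] using key

theorem mul_inv_pow_mul_eq_reduced_of_krylov_range (hQV : Q * V = 1) (hE : IsUnit E.det)
    (hEr : IsUnit (Q * E * V).det) {b : Matrix n ι R} {c : Matrix ι n R} {k : ℕ}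
    (hb : ∀ i, 1 ≤ i → i ≤ k → ∃ X : Matrix r ι R, E⁻¹ ^ i * b = V * X)
    (hc : ∀ i, 1 ≤ i → i ≤ k → ∃ Y : Matrix ι r R, c * E⁻¹ ^ i = Y * Q) {j : ℕ} (hj : j < 2 * k) :
    c * E⁻¹ ^ (j + 1) * b = c * V * (Q * E * V)⁻¹ ^ (j + 1) * (Q * b) := by
  set q := min (j + 1) k
  obtain ⟨X, hX⟩ := hb q (by omega) (min_le_right _ _)
  have hRight : E⁻¹ ^ q * b = V * ((Q * E * V)⁻¹ ^ q * (Q * b)) := by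
    rw [← mul_inv_pow_mul_eq_of_krylov_range hQV hE hEr b q
      fun i h₁ h₂ => hb i h₁ (h₂.trans (min_le_right _ _)), hX, ← Matrix.mul_assoc Q, hQV,
      Matrix.one_mul]
  have hLeft := mul_inv_pow_mul_eq_of_krylov_range_left hQV hE hEr c (j + 1 - q)
    fun i h₁ h₂ => hc i h₁ (by omega)
  have hsplit : j + 1 - q + q = j + 1 := by omega
  calc c * E⁻¹ ^ (j + 1) * b = c * E⁻¹ ^ (j + 1 - q) * (E⁻¹ ^ q * b) := by
        conv_lhs => rw [← hsplit, pow_add]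
        simp only [Matrix.mul_assoc]
    _ = c * V * (Q * E * V)⁻¹ ^ (j + 1 - q) * ((Q * E * V)⁻¹ ^ q * (Q * b)) := by
        rw [hRight, ← Matrix.mul_assoc, hLeft]
    _ = c * V * (Q * E * V)⁻¹ ^ (j + 1) * (Q * b) := by
        conv_rhs => rw [← hsplit, pow_add]
        simp only [Matrix.mul_assoc]

end KrylovProjection

end Matrix

theorem moment_matching_two_sided_general
    {n r k : ℕ} (A : Matrix (Fin n) (Fin n) ℝ)
    (C : Matrix (Fin 1) (Fin n) ℝ)
    (Ac : Matrix (Fin n) (Fin n) ℂ) (hAc : Ac = A.map (Complex.ofReal : ℝ → ℂ))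
    (Bc : Matrix (Fin n) (Fin 1) ℂ)
    (Cc : Matrix (Fin 1) (Fin n) ℂ) (hCc : Cc = C.map (Complex.ofReal : ℝ → ℂ))
    (V W : Matrix (Fin n) (Fin r) ℂ) (hWV : Wᴴ * V = 1)
    (s₀ : ℂ) (hinv : IsUnit (Ac - s₀ • 1))
    (hspanV : ∀ i : ℕ, 1 ≤ i → i ≤ k →
      (fun row => (((Ac - s₀ • 1)⁻¹) ^ i * Bc) row 0) ∈
        Submodule.span ℂ (Set.range Vᵀ))
    (hspanW : ∀ i : ℕ, 1 ≤ i → i ≤ k →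
      (fun row => (((Acᵀ - (starRingEnd ℂ s₀) • 1)⁻¹) ^ i * Ccᵀ) row 0) ∈
        Submodule.span ℂ (Set.range Wᵀ))
    (Ar : Matrix (Fin r) (Fin r) ℂ) (hAr : Ar = Wᴴ * Ac * V)
    (Br : Matrix (Fin r) (Fin 1) ℂ) (hBr : Br = Wᴴ * Bc)
    (Cr : Matrix (Fin 1) (Fin r) ℂ) (hCr : Cr = Cc * V)
    (hinvr : IsUnit (Ar - s₀ • 1)) :
    ∀ j : ℕ, j < 2 * k →
      Cc * ((Ac - s₀ • 1)⁻¹) ^ (j + 1) * Bc =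
        Cr * ((Ar - s₀ • 1)⁻¹) ^ (j + 1) * Br := by
  intro j hj
  have hEr : Ar - s₀ • 1 = Wᴴ * (Ac - s₀ • 1) * V := by
    rw [hAr, Matrix.mul_sub, Matrix.sub_mul, Matrix.mul_smul, Matrix.smul_mul, Matrix.mul_one, hWV]
  have hEH : Acᵀ - starRingEnd ℂ s₀ • 1 = (Ac - s₀ • 1)ᴴ := by
    rw [conjTranspose_sub, conjTranspose_smul, conjTranspose_one, hAc, conjTranspose_map_ofReal_s15]
    rfl
  rw [hEr] at hinvr ⊢
  rw [hBr, hCr]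
  refine mul_inv_pow_mul_eq_reduced_of_krylov_range hWV ((isUnit_iff_isUnit_det _).mp hinv)
    ((isUnit_iff_isUnit_det _).mp hinvr)
    (fun i h₁ h₂ => exists_eq_mul_of_col_mem_span_range_transpose V _ (hspanV i h₁ h₂))
    (fun i h₁ h₂ => ?_) hj
  obtain ⟨Y, hY⟩ := exists_eq_mul_of_col_mem_span_range_transpose W _ (hspanW i h₁ h₂)
  rw [hEH, ← conjTranspose_nonsing_inv, ← conjTranspose_pow, hCc, ← conjTranspose_map_ofReal_s15,
    ← hCc, ← conjTranspose_mul] at hY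
  exact ⟨Yᴴ, by rw [← conjTranspose_conjTranspose (Cc * _), hY, conjTranspose_mul]⟩

/-- Two-sided rational interpolation: if `(A − s₀I)⁻ⁱB ∈ span(V)` and
`(Aᵀ − conj(s₀)I)⁻ⁱCᵀ ∈ span(W)` for `i = 1, …, k`, then the first `2k` moments at
`s₀` of the original and the reduced system coincide. -/
theorem moment_matching_two_sided
    {n r k : ℕ} (A : Matrix (Fin n) (Fin n) ℝ) (B : Matrix (Fin n) (Fin 1) ℝ)
    (C : Matrix (Fin 1) (Fin n) ℝ)
    (Ac : Matrix (Fin n) (Fin n) ℂ) (hAc : Ac = A.map (Complex.ofReal : ℝ → ℂ))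
    (Bc : Matrix (Fin n) (Fin 1) ℂ) (hBc : Bc = B.map (Complex.ofReal : ℝ → ℂ))
    (Cc : Matrix (Fin 1) (Fin n) ℂ) (hCc : Cc = C.map (Complex.ofReal : ℝ → ℂ))
    (V W : Matrix (Fin n) (Fin r) ℂ) (hWV : Wᴴ * V = 1)
    (s₀ : ℂ) (hinv : IsUnit (Ac - s₀ • 1))
    (hspanV : ∀ i : ℕ, 1 ≤ i → i ≤ k →
      (fun row => (((Ac - s₀ • 1)⁻¹) ^ i * Bc) row 0) ∈
        Submodule.span ℂ (Set.range Vᵀ))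
    (hspanW : ∀ i : ℕ, 1 ≤ i → i ≤ k →
      (fun row => (((Acᵀ - (starRingEnd ℂ s₀) • 1)⁻¹) ^ i * Ccᵀ) row 0) ∈
        Submodule.span ℂ (Set.range Wᵀ))
    (Ar : Matrix (Fin r) (Fin r) ℂ) (hAr : Ar = Wᴴ * Ac * V)
    (Br : Matrix (Fin r) (Fin 1) ℂ) (hBr : Br = Wᴴ * Bc)
    (Cr : Matrix (Fin 1) (Fin r) ℂ) (hCr : Cr = Cc * V)
    (hinvr : IsUnit (Ar - s₀ • 1)) :
    ∀ j : ℕ, j < 2 * k →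
      Cc * ((Ac - s₀ • 1)⁻¹) ^ (j + 1) * Bc =
        Cr * ((Ar - s₀ • 1)⁻¹) ^ (j + 1) * Br :=
  moment_matching_two_sided_general A C Ac hAc Bc Cc hCc V W hWV s₀ hinv hspanV hspanW Ar hAr Br hBr
    Cr hCr hinvr
end

section
/- Let A ∈ ℝ^{n×n}, B ∈ ℝ^{n×1}, C ∈ ℝ^{1×n}, and let V, W ∈ ℂ^{n×r} satisfy W^H V = I_r. Suppose A^i B lies in the column span of V for i = 0, ..., k−1. Define Â = W^H A V, B̂ = W^H B, Ĉ = C V. Then the first k Markov parameters coincide: C A^{j-1} B = Ĉ Â^{j-1} B̂ for j = 1, ..., k. -/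
open Matrix Submodule Set

/-!
Since `Wᴴ V = 1`, the map `x ↦ V (Wᴴ x)` fixes every vector in the column span of `V`, in
particular `AⁱB` for `i < k`. Inserting it between `A` and `Aⁱ B` gives inductively
`Âⁱ B̂ = Wᴴ Aⁱ B`, and then `Ĉ Âⁱ B̂ = C V Wᴴ Aⁱ B = C Aⁱ B`.
-/

namespace Matrix

variable {R : Type*} [CommRing R] {l m n : Type*}

theorem exists_mulVec_eq_of_mem_span_col [Fintype n] {V : Matrix m n R} {x : m → R}
    (hx : x ∈ span R (range V.col)) : ∃ c, V *ᵥ c = x := by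
  rwa [← range_mulVecLin] at hx

theorem col_mul [Fintype m] (M : Matrix l m R) (N : Matrix m n R) (j : n) :
    (M * N).col j = M *ᵥ N.col j :=
  rfl

theorem mul_mul_eq_self_of_col_mem_span_col [Fintype m] [Fintype n] [DecidableEq n]
    {V : Matrix m n R} {P : Matrix n m R} (hPV : P * V = 1) {X : Matrix m l R}
    (hX : ∀ j, X.col j ∈ span R (range V.col)) : V * (P * X) = X := by
  ext i j
  obtain ⟨c, hc⟩ := exists_mulVec_eq_of_mem_span_col (hX j)
  change (V * (P * X)).col j i = X.col j i
  rw [col_mul, col_mul, ← hc, mulVec_mulVec c P V, hPV, one_mulVec]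

section Projected

variable [Fintype m] [DecidableEq m] [Fintype n] [DecidableEq n]
  {V : Matrix m n R} {P : Matrix n m R} {A : Matrix m m R} {X : Matrix m l R} {k : ℕ}

theorem projected_pow_mul_eq (hfix : ∀ i < k, V * (P * (A ^ i * X)) = A ^ i * X) :
    ∀ i < k, (P * A * V) ^ i * (P * X) = P * (A ^ i * X) := by
  intro i hi
  induction i with
  | zero => simp
  | succ i ih =>
    calc (P * A * V) ^ (i + 1) * (P * X) = P * A * (V * (P * (A ^ i * X))) := by
          rw [pow_succ', Matrix.mul_assoc, ih (by omega), Matrix.mul_assoc]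
      _ = P * (A ^ (i + 1) * X) := by
          rw [hfix i (by omega), pow_succ', Matrix.mul_assoc, Matrix.mul_assoc]

theorem mul_projected_pow_mul_eq [Fintype l] {C : Matrix l m R}
    (hfix : ∀ i < k, V * (P * (A ^ i * X)) = A ^ i * X) :
    ∀ i < k, C * V * (P * A * V) ^ i * (P * X) = C * A ^ i * X := by
  intro i hi
  rw [Matrix.mul_assoc (C * V), projected_pow_mul_eq hfix i hi, Matrix.mul_assoc C V,
    hfix i hi, Matrix.mul_assoc]

end Projected

end Matrix

theorem markov_matching_one_sided_general
    {n r k : ℕ}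
    (Ac : Matrix (Fin n) (Fin n) ℂ)
    (Bc : Matrix (Fin n) (Fin 1) ℂ)
    (Cc : Matrix (Fin 1) (Fin n) ℂ)
    (V W : Matrix (Fin n) (Fin r) ℂ) (hWV : Wᴴ * V = 1)
    (hspan : ∀ i : ℕ, i < k →
      (fun row => (Ac ^ i * Bc) row 0) ∈ Submodule.span ℂ (Set.range Vᵀ))
    (Ar : Matrix (Fin r) (Fin r) ℂ) (hAr : Ar = Wᴴ * Ac * V)
    (Br : Matrix (Fin r) (Fin 1) ℂ) (hBr : Br = Wᴴ * Bc)
    (Cr : Matrix (Fin 1) (Fin r) ℂ) (hCr : Cr = Cc * V) :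
    ∀ j : ℕ, 1 ≤ j → j ≤ k →
      Cc * Ac ^ (j - 1) * Bc = Cr * Ar ^ (j - 1) * Br := by
  intro j hj hjk
  subst hAr hBr hCr
  have hfix : ∀ i < k, V * (Wᴴ * (Ac ^ i * Bc)) = Ac ^ i * Bc := fun i hi =>
    mul_mul_eq_self_of_col_mem_span_col hWV fun c => Subsingleton.elim c 0 ▸ hspan i hi
  exact (mul_projected_pow_mul_eq hfix (j - 1) (by omega)).symm

/-- One-sided interpolation at `∞`: if `AⁱB ∈ span(V)` for `i = 0, …, k−1`, then the
first `k` Markov parameters of the original and the reduced system coincide. -/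
theorem markov_matching_one_sided
    {n r k : ℕ} (A : Matrix (Fin n) (Fin n) ℝ) (B : Matrix (Fin n) (Fin 1) ℝ)
    (C : Matrix (Fin 1) (Fin n) ℝ)
    (Ac : Matrix (Fin n) (Fin n) ℂ) (hAc : Ac = A.map (Complex.ofReal : ℝ → ℂ))
    (Bc : Matrix (Fin n) (Fin 1) ℂ) (hBc : Bc = B.map (Complex.ofReal : ℝ → ℂ))
    (Cc : Matrix (Fin 1) (Fin n) ℂ) (hCc : Cc = C.map (Complex.ofReal : ℝ → ℂ))
    (V W : Matrix (Fin n) (Fin r) ℂ) (hWV : Wᴴ * V = 1)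
    (hspan : ∀ i : ℕ, i < k →
      (fun row => (Ac ^ i * Bc) row 0) ∈ Submodule.span ℂ (Set.range Vᵀ))
    (Ar : Matrix (Fin r) (Fin r) ℂ) (hAr : Ar = Wᴴ * Ac * V)
    (Br : Matrix (Fin r) (Fin 1) ℂ) (hBr : Br = Wᴴ * Bc)
    (Cr : Matrix (Fin 1) (Fin r) ℂ) (hCr : Cr = Cc * V) :
    ∀ j : ℕ, 1 ≤ j → j ≤ k →
      Cc * Ac ^ (j - 1) * Bc = Cr * Ar ^ (j - 1) * Br :=
  markov_matching_one_sided_general Ac Bc Cc V W hWV hspan Ar hAr Br hBr Cr hCr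
end

section
/- Let A ∈ ℝ^{n×n}, B ∈ ℝ^{n×1}, C ∈ ℝ^{1×n}, and let V, W ∈ ℂ^{n×r} satisfy W^H V = I_r. Suppose A^i B lies in the column span of V for i = 0, ..., k−1, and (A^T)^i C^T lies in the column span of W for i = 0, ..., k−1. Define Â = W^H A V, B̂ = W^H B, Ĉ = C V. Then the first 2k Markov parameters coincide: C A^{j-1} B = Ĉ Â^{j-1} B̂ for j = 1, ..., 2k. -/
/-!
`V Wᴴ` is a projector fixing `Aⁱ B` for `i < k`, so `Âⁱ B̂ = Wᴴ Aⁱ B` for `i ≤ k`; dually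
`Ĉ Âⁱ = C Aⁱ V` for `i ≤ k`, since `C Aⁱ` lies in the row span of `Wᴴ` (the condition on `W` is
stated for `(Aᵀ)ⁱ Cᵀ`, which equals `(C Aⁱ)ᴴ` because `C Aⁱ` is real). Writing `j - 1 = p + q`
with `p ≤ k`, `q < k` and inserting `V Wᴴ` between `Aᵖ` and `A^q` gives
`C A^(j-1) B = (C Aᵖ V)(Wᴴ A^q B) = (Ĉ Âᵖ)(Â^q B̂)`.
-/

open Matrix

namespace Matrix

variable {R : Type*} {m n ι r : Type*}

theorem exists_mul_eq_of_forall_col_mem_span [CommSemiring R] [Fintype r] {V : Matrix m r R}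
    {M : Matrix m ι R} (hM : ∀ j, (fun i => M i j) ∈ Submodule.span R (Set.range Vᵀ)) :
    ∃ X : Matrix r ι R, V * X = M := by
  have hrange : ∀ j, (fun i => M i j) ∈ LinearMap.range V.mulVecLin := by
    rw [range_mulVecLin]
    exact hM
  choose x hx using hrange
  exact ⟨of fun l j => x j l, ext fun i j => congrFun (hx j) i⟩

theorem conjTranspose_transpose_map_ofReal (M : Matrix m n ℝ) :
    (M.map Complex.ofReal)ᵀᴴ = M.map Complex.ofReal := by
  ext
  simp

section PetrovGalerkin

variable [Ring R] [Fintype n] [DecidableEq n] [Fintype r] [DecidableEq r]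
  {A : Matrix n n R} {V : Matrix n r R} {W : Matrix r n R} {k : ℕ}

theorem petrovGalerkin_pow_mul (hWV : W * V = 1) {B : Matrix n ι R}
    (hB : ∀ i < k, ∃ X : Matrix r ι R, V * X = A ^ i * B) {i : ℕ} (hi : i ≤ k) :
    (W * A * V) ^ i * (W * B) = W * (A ^ i * B) := by
  induction i with
  | zero => simp
  | succ i ih =>
    obtain ⟨X, hX⟩ := hB i hi
    have hproj : V * (W * (A ^ i * B)) = A ^ i * B := by
      rw [← hX, ← Matrix.mul_assoc W, hWV, Matrix.one_mul]
    rw [pow_succ', Matrix.mul_assoc, ih (by omega), Matrix.mul_assoc, hproj, pow_succ',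
      Matrix.mul_assoc, Matrix.mul_assoc]

theorem mul_petrovGalerkin_pow (hWV : W * V = 1) {C : Matrix ι n R}
    (hC : ∀ i < k, ∃ Y : Matrix ι r R, Y * W = C * A ^ i) {i : ℕ} (hi : i ≤ k) :
    C * V * (W * A * V) ^ i = C * A ^ i * V := by
  induction i with
  | zero => simp
  | succ i ih =>
    obtain ⟨Y, hY⟩ := hC i hi
    have hproj : C * A ^ i * V * W = C * A ^ i := by
      rw [← hY, Matrix.mul_assoc Y, hWV, Matrix.mul_one]
    rw [pow_succ, ← Matrix.mul_assoc, ih (by omega), ← Matrix.mul_assoc, ← Matrix.mul_assoc,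
      hproj, pow_succ, Matrix.mul_assoc C]

theorem mul_pow_mul_eq_petrovGalerkin (hWV : W * V = 1) {B : Matrix n ι R} {C : Matrix m n R}
    (hB : ∀ i < k, ∃ X : Matrix r ι R, V * X = A ^ i * B)
    (hC : ∀ i < k, ∃ Y : Matrix m r R, Y * W = C * A ^ i) {j : ℕ}
    (hj : j < 2 * k) :
    C * A ^ j * B = C * V * (W * A * V) ^ j * (W * B) := by
  obtain ⟨p, q, rfl, hp, hq⟩ : ∃ p q, j = p + q ∧ p ≤ k ∧ q < k :=
    ⟨min j k, j - min j k, by omega, min_le_right j k, by omega⟩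
  obtain ⟨X, hX⟩ := hB q hq
  have hproj : V * (W * (A ^ q * B)) = A ^ q * B := by
    rw [← hX, ← Matrix.mul_assoc W, hWV, Matrix.one_mul]
  calc C * A ^ (p + q) * B = C * A ^ p * V * (W * (A ^ q * B)) := by
        rw [Matrix.mul_assoc (C * A ^ p) V, hproj, pow_add]
        simp only [Matrix.mul_assoc]
    _ = C * V * (W * A * V) ^ p * ((W * A * V) ^ q * (W * B)) := by
        rw [mul_petrovGalerkin_pow hWV hC hp, petrovGalerkin_pow_mul hWV hB hq.le]
    _ = C * V * (W * A * V) ^ (p + q) * (W * B) := by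
        rw [pow_add]
        simp only [Matrix.mul_assoc]

end PetrovGalerkin

end Matrix

theorem markov_matching_two_sided_general
    {n r k : ℕ} (A : Matrix (Fin n) (Fin n) ℝ)
    (C : Matrix (Fin 1) (Fin n) ℝ)
    (Ac : Matrix (Fin n) (Fin n) ℂ) (hAc : Ac = A.map (Complex.ofReal : ℝ → ℂ))
    (Bc : Matrix (Fin n) (Fin 1) ℂ)
    (Cc : Matrix (Fin 1) (Fin n) ℂ) (hCc : Cc = C.map (Complex.ofReal : ℝ → ℂ))
    (V W : Matrix (Fin n) (Fin r) ℂ) (hWV : Wᴴ * V = 1)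
    (hspanV : ∀ i : ℕ, i < k →
      (fun row => (Ac ^ i * Bc) row 0) ∈ Submodule.span ℂ (Set.range Vᵀ))
    (hspanW : ∀ i : ℕ, i < k →
      (fun row => ((Acᵀ) ^ i * Ccᵀ) row 0) ∈ Submodule.span ℂ (Set.range Wᵀ))
    (Ar : Matrix (Fin r) (Fin r) ℂ) (hAr : Ar = Wᴴ * Ac * V)
    (Br : Matrix (Fin r) (Fin 1) ℂ) (hBr : Br = Wᴴ * Bc)
    (Cr : Matrix (Fin 1) (Fin r) ℂ) (hCr : Cr = Cc * V) :
    ∀ j : ℕ, 1 ≤ j → j ≤ 2 * k →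
      Cc * Ac ^ (j - 1) * Bc = Cr * Ar ^ (j - 1) * Br := by
  intro j hj1 hj2
  subst hAr hBr hCr
  refine mul_pow_mul_eq_petrovGalerkin (k := k) hWV (fun i hi => ?_) (fun i hi => ?_) (by omega)
  · exact exists_mul_eq_of_forall_col_mem_span fun l : Fin 1 => by
      rw [Subsingleton.elim l 0]; exact hspanV i hi
  · obtain ⟨Y, hY⟩ :=
      exists_mul_eq_of_forall_col_mem_span fun l : Fin 1 => by
        rw [Subsingleton.elim l 0]; exact hspanW i hi
    have hreal : Cc * Ac ^ i = (C * A ^ i).map Complex.ofReal := by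
      rw [hCc, hAc, show (Complex.ofReal : ℝ → ℂ) = Complex.ofRealHom from rfl, Matrix.map_mul,
        Matrix.map_pow]
    refine ⟨Yᴴ, ?_⟩
    rw [← conjTranspose_mul, hY, ← transpose_pow, ← transpose_mul, hreal,
      conjTranspose_transpose_map_ofReal]

/-- Two-sided interpolation at `∞`: if `AⁱB ∈ span(V)` and `(Aᵀ)ⁱCᵀ ∈ span(W)` for
`i = 0, …, k−1`, then the first `2k` Markov parameters of the original and the
reduced system coincide. -/
theorem markov_matching_two_sided
    {n r k : ℕ} (A : Matrix (Fin n) (Fin n) ℝ) (B : Matrix (Fin n) (Fin 1) ℝ)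
    (C : Matrix (Fin 1) (Fin n) ℝ)
    (Ac : Matrix (Fin n) (Fin n) ℂ) (hAc : Ac = A.map (Complex.ofReal : ℝ → ℂ))
    (Bc : Matrix (Fin n) (Fin 1) ℂ) (hBc : Bc = B.map (Complex.ofReal : ℝ → ℂ))
    (Cc : Matrix (Fin 1) (Fin n) ℂ) (hCc : Cc = C.map (Complex.ofReal : ℝ → ℂ))
    (V W : Matrix (Fin n) (Fin r) ℂ) (hWV : Wᴴ * V = 1)
    (hspanV : ∀ i : ℕ, i < k →
      (fun row => (Ac ^ i * Bc) row 0) ∈ Submodule.span ℂ (Set.range Vᵀ))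
    (hspanW : ∀ i : ℕ, i < k →
      (fun row => ((Acᵀ) ^ i * Ccᵀ) row 0) ∈ Submodule.span ℂ (Set.range Wᵀ))
    (Ar : Matrix (Fin r) (Fin r) ℂ) (hAr : Ar = Wᴴ * Ac * V)
    (Br : Matrix (Fin r) (Fin 1) ℂ) (hBr : Br = Wᴴ * Bc)
    (Cr : Matrix (Fin 1) (Fin r) ℂ) (hCr : Cr = Cc * V) :
    ∀ j : ℕ, 1 ≤ j → j ≤ 2 * k →
      Cc * Ac ^ (j - 1) * Bc = Cr * Ar ^ (j - 1) * Br :=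
  markov_matching_two_sided_general A C Ac hAc Bc Cc hCc V W hWV hspanV hspanW Ar hAr Br hBr Cr hCr
end
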